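/- arXiv:2002.01259 — 9 statements merged into one kernel-verified Lean document; each statement's English description precedes it below -/
import Mathlib

section
/- For every ε>0, the curves x₁(t)=ε·sin(t/ε), x₂(t)=ε·cos(t/ε)−ε, x₃(t)=ε·(t/2−ε·sin(2t/ε)/4), together with the momenta ξ₁(t)=cos(t/ε)/2, ξ₂(t)=0, ξ₃(t)=1/(2ε), define a global solution of the Heisenberg bicharacteristic system which moreover satisfies g*(x(t),ξ(t))=1/4 for every t∈ℝ and has x(0)=0. -/
/-!
With `ξ₂ = 0` and `ξ₃ = 1/(2ε)` constant, the projection `(x₁, x₂)` runs with unit speed around the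
circle of radius `ε` centred at `(0, -ε)`, and `ξ₁ = ẋ₁/2`, so `g* = |ẋ|²/4 = 1/4`.
The vertical component is the integral of `ẋ₃ = x₁²/ε = ε sin²(t/ε) = ε(1 - cos(2t/ε))/2`,
which is where the `sin(2t/ε)` term of `x₃` comes from.
-/

/-- The Heisenberg bicharacteristic system: the Hamiltonian system on ℝ³×ℝ³ associated with
`g*(x,ξ) = ξ₁² + (ξ₂ - x₁ξ₃)²`, on a set `I` of times. -/
def HeisenbergBichar (x₁ x₂ x₃ ξ₁ ξ₂ ξ₃ : ℝ → ℝ) (I : Set ℝ) : Prop :=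
  ∀ t ∈ I,
    HasDerivAt x₁ (2 * ξ₁ t) t ∧
    HasDerivAt x₂ (2 * (ξ₂ t - x₁ t * ξ₃ t)) t ∧
    HasDerivAt x₃ (-2 * x₁ t * (ξ₂ t - x₁ t * ξ₃ t)) t ∧
    HasDerivAt ξ₁ (2 * ξ₃ t * (ξ₂ t - x₁ t * ξ₃ t)) t ∧
    HasDerivAt ξ₂ 0 t ∧
    HasDerivAt ξ₃ 0 t

open Real

namespace HeisenbergSpiral

lemma hasDerivAt_sin_div (ε t : ℝ) : HasDerivAt (fun t => sin (t / ε)) (cos (t / ε) / ε) t := by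
  simpa [div_eq_mul_inv] using ((hasDerivAt_id t).div_const ε).sin

lemma hasDerivAt_cos_div (ε t : ℝ) : HasDerivAt (fun t => cos (t / ε)) (-sin (t / ε) / ε) t := by
  simpa [div_eq_mul_inv] using ((hasDerivAt_id t).div_const ε).cos

lemma hasDerivAt_x₁ {ε : ℝ} (hε : ε ≠ 0) (t : ℝ) :
    HasDerivAt (fun t => ε * sin (t / ε)) (cos (t / ε)) t :=
  ((hasDerivAt_sin_div ε t).const_mul ε).congr_deriv (by field_simp)

lemma hasDerivAt_x₂ {ε : ℝ} (hε : ε ≠ 0) (t : ℝ) :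
    HasDerivAt (fun t => ε * cos (t / ε) - ε) (-sin (t / ε)) t :=
  (((hasDerivAt_cos_div ε t).const_mul ε).sub_const ε).congr_deriv (by field_simp)

lemma hasDerivAt_x₃ {ε : ℝ} (hε : ε ≠ 0) (t : ℝ) :
    HasDerivAt (fun t => ε * (t / 2 - ε * sin (2 * t / ε) / 4)) (ε * sin (t / ε) ^ 2) t := by
  have h := (hasDerivAt_sin_div ε (2 * t)).comp t ((hasDerivAt_id t).const_mul 2)
  have h' := (((hasDerivAt_id t).div_const 2).sub ((h.const_mul ε).div_const 4)).const_mul ε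
  refine h'.congr_deriv ?_
  rw [mul_div_assoc 2 t ε, cos_two_mul_eq_one_sub]
  field_simp
  ring

lemma hasDerivAt_ξ₁ (ε t : ℝ) :
    HasDerivAt (fun t => cos (t / ε) / 2) (-sin (t / ε) / (2 * ε)) t :=
  ((hasDerivAt_cos_div ε t).div_const 2).congr_deriv (by ring)

end HeisenbergSpiral

open HeisenbergSpiral in
/-- For every ε>0, the explicit spiraling curves, together with the given momenta, define a
global solution of the Heisenberg bicharacteristic system with `g* ≡ 1/4` and `x(0) = 0`. -/
theorem stmt_0 (ε : ℝ) (hε : 0 < ε) :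
    HeisenbergBichar
      (fun t => ε * Real.sin (t / ε))
      (fun t => ε * Real.cos (t / ε) - ε)
      (fun t => ε * (t / 2 - ε * Real.sin (2 * t / ε) / 4))
      (fun t => Real.cos (t / ε) / 2)
      (fun _ => 0)
      (fun _ => 1 / (2 * ε))
      Set.univ ∧
    (∀ t : ℝ,
      (Real.cos (t / ε) / 2) ^ 2 +
        ((0 : ℝ) - (ε * Real.sin (t / ε)) * (1 / (2 * ε))) ^ 2 = 1 / 4) ∧
    ε * Real.sin (0 / ε) = 0 ∧
    ε * Real.cos (0 / ε) - ε = 0 ∧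
    ε * (0 / 2 - ε * Real.sin (2 * 0 / ε) / 4) = 0 := by
  have hε₀ : ε ≠ 0 := hε.ne'
  refine ⟨fun t _ => ⟨?_, ?_, ?_, ?_, hasDerivAt_const t 0, hasDerivAt_const t _⟩, fun t => ?_,
    by simp, by simp, by simp⟩
  · exact (hasDerivAt_x₁ hε₀ t).congr_deriv (by ring)
  · exact (hasDerivAt_x₂ hε₀ t).congr_deriv (by field_simp; ring)
  · exact (hasDerivAt_x₃ hε₀ t).congr_deriv (by field_simp; ring)
  · exact (hasDerivAt_ξ₁ ε t).congr_deriv (by field_simp; ring)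
  · field_simp
    linear_combination 4 * sin_sq_add_cos_sq (t / ε)
end

section
/- For every T₀>0 and every δ>0 there exist ε>0 and a solution (x,ξ):[0,T₀]→ℝ³×ℝ³ of the Heisenberg bicharacteristic system such that g*(x(t),ξ(t))=1/4 for all t∈[0,T₀], x(0)=0, and the Euclidean norm ‖x(t)‖ is at most δ for every t∈[0,T₀]. In other words, there are non-stationary normal geodesics of the Heisenberg structure, traveled at speed 1, which remain within an arbitrarily small neighborhood of the origin during an arbitrarily long time interval. -/
open Real

lemma sqrt_sq_add_sq_add_sq_le (a b c : ℝ) : √(a ^ 2 + b ^ 2 + c ^ 2) ≤ |a| + |b| + |c| := by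
  refine Real.sqrt_le_iff.2 ⟨by positivity, ?_⟩
  nlinarith [sq_abs a, sq_abs b, sq_abs c, abs_nonneg a, abs_nonneg b, abs_nonneg c,
    mul_nonneg (abs_nonneg a) (abs_nonneg b), mul_nonneg (abs_nonneg a) (abs_nonneg c),
    mul_nonneg (abs_nonneg b) (abs_nonneg c)]

lemma hasDerivAt_sin_mul (c t : ℝ) :
    HasDerivAt (fun s => sin (c * s)) (cos (c * t) * c) t := by
  simpa using ((hasDerivAt_id t).const_mul c).sin

lemma hasDerivAt_cos_mul (c t : ℝ) :
    HasDerivAt (fun s => cos (c * s)) (-sin (c * t) * c) t := by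
  simpa using ((hasDerivAt_id t).const_mul c).cos

noncomputable section

namespace HeisenbergGeodesic

variable {a : ℝ}

def x₁ (a t : ℝ) : ℝ := sin (2 * a * t) / (2 * a)
def x₂ (a t : ℝ) : ℝ := (cos (2 * a * t) - 1) / (2 * a)
def x₃ (a t : ℝ) : ℝ := (4 * a * t - sin (4 * a * t)) / (16 * a ^ 2)
def ξ₁ (a t : ℝ) : ℝ := cos (2 * a * t) / 2

theorem heisenbergBichar (ha : a ≠ 0) (I : Set ℝ) :
    HeisenbergBichar (x₁ a) (x₂ a) (x₃ a) (ξ₁ a) (fun _ => 0) (fun _ => a) I := by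
  intro t _
  have hcos4 : cos (4 * a * t) = 1 - 2 * sin (2 * a * t) ^ 2 := by
    rw [show 4 * a * t = 2 * (2 * a * t) by ring, cos_two_mul, cos_sq']; ring
  refine ⟨?_, ?_, ?_, ?_, hasDerivAt_const t 0, hasDerivAt_const t a⟩
  · refine ((hasDerivAt_sin_mul (2 * a) t).div_const (2 * a)).congr_deriv ?_
    rw [ξ₁]; field_simp
  · refine (((hasDerivAt_cos_mul (2 * a) t).sub_const 1).div_const (2 * a)).congr_deriv ?_
    rw [x₁]; field_simp; ring
  · refine ((((hasDerivAt_id t).const_mul (4 * a)).sub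
      (hasDerivAt_sin_mul (4 * a) t)).div_const (16 * a ^ 2)).congr_deriv ?_
    rw [x₁, hcos4]; field_simp; ring
  · refine ((hasDerivAt_cos_mul (2 * a) t).div_const 2).congr_deriv ?_
    rw [x₁]; field_simp; ring

theorem hamiltonian_eq (ha : a ≠ 0) (t : ℝ) :
    ξ₁ a t ^ 2 + (0 - x₁ a t * a) ^ 2 = 1 / 4 := by
  simp only [ξ₁, x₁]
  field_simp
  linear_combination 4 * sin_sq_add_cos_sq (2 * a * t)

lemma abs_x₁_le (ha : 0 < a) (t : ℝ) : |x₁ a t| ≤ 1 / a := by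
  rw [x₁, abs_div, abs_of_pos (by positivity : 0 < 2 * a), div_le_div_iff₀ (by positivity) ha]
  nlinarith [abs_sin_le_one (2 * a * t)]

lemma abs_x₂_le (ha : 0 < a) (t : ℝ) : |x₂ a t| ≤ 1 / a := by
  have h : |cos (2 * a * t) - 1| ≤ 2 := abs_le.2
    ⟨by linarith [neg_one_le_cos (2 * a * t)], by linarith [cos_le_one (2 * a * t)]⟩
  rw [x₂, abs_div, abs_of_pos (by positivity : 0 < 2 * a), div_le_div_iff₀ (by positivity) ha]
  nlinarith

lemma abs_x₃_le (ha : 0 < a) {t : ℝ} (ht : 0 ≤ t) : |x₃ a t| ≤ t / a := by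
  have hy : 0 ≤ 4 * a * t := by positivity
  have hsin : |sin (4 * a * t)| ≤ 4 * a * t := abs_sin_le_abs.trans_eq (abs_of_nonneg hy)
  have h : |4 * a * t - sin (4 * a * t)| ≤ 8 * a * t := abs_le.2
    ⟨by linarith [sin_le hy], by linarith [neg_abs_le (sin (4 * a * t))]⟩
  rw [x₃, abs_div, abs_of_pos (by positivity : 0 < 16 * a ^ 2),
    div_le_div_iff₀ (by positivity) ha]
  nlinarith

theorem sqrt_sq_add_sq_add_sq_le_div (ha : 0 < a) {t : ℝ} (ht : 0 ≤ t) :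
    √(x₁ a t ^ 2 + x₂ a t ^ 2 + x₃ a t ^ 2) ≤ (t + 2) / a := by
  calc _ ≤ |x₁ a t| + |x₂ a t| + |x₃ a t| := sqrt_sq_add_sq_add_sq_le _ _ _
    _ ≤ 1 / a + 1 / a + t / a := by
        gcongr
        exacts [abs_x₁_le ha t, abs_x₂_le ha t, abs_x₃_le ha ht]
    _ = (t + 2) / a := by ring

end HeisenbergGeodesic

end

open HeisenbergGeodesic in
/-- For every T₀>0 and δ>0 there is a normal geodesic of the Heisenberg structure, traveled at
speed 1 (i.e. `g* ≡ 1/4` along the solution), starting at the origin and remaining at Euclidean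
distance at most δ of the origin during the whole time interval [0,T₀]. -/
theorem stmt_1 (T₀ δ : ℝ) (hT₀ : 0 < T₀) (hδ : 0 < δ) :
    ∃ ε > (0 : ℝ), ∃ x₁ x₂ x₃ ξ₁ ξ₂ ξ₃ : ℝ → ℝ,
      HeisenbergBichar x₁ x₂ x₃ ξ₁ ξ₂ ξ₃ (Set.Icc 0 T₀) ∧
      (∀ t ∈ Set.Icc (0 : ℝ) T₀,
        (ξ₁ t) ^ 2 + (ξ₂ t - x₁ t * ξ₃ t) ^ 2 = 1 / 4) ∧
      x₁ 0 = 0 ∧ x₂ 0 = 0 ∧ x₃ 0 = 0 ∧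
      ∀ t ∈ Set.Icc (0 : ℝ) T₀,
        Real.sqrt ((x₁ t) ^ 2 + (x₂ t) ^ 2 + (x₃ t) ^ 2) ≤ δ := by
  set a := (T₀ + 2) / δ with ha_def
  have ha : 0 < a := by positivity
  refine ⟨1, one_pos, x₁ a, x₂ a, x₃ a, ξ₁ a, fun _ => 0, fun _ => a,
    heisenbergBichar ha.ne' _, fun t _ => hamiltonian_eq ha.ne' t,
    by simp [x₁], by simp [x₂], by simp [x₃], ?_⟩
  rintro t ⟨ht₀, htT⟩
  calc _ ≤ (t + 2) / a := sqrt_sq_add_sq_add_sq_le_div ha ht₀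
    _ ≤ (T₀ + 2) / a := by gcongr
    _ = δ := by rw [ha_def]; field_simp
end

section
/- Let ξ₂,ξ₃,φ,B,C be real constants with ξ₃≠0. Then the curves x₁(t)=(1/(2ξ₃))cos(2ξ₃t+φ)+ξ₂/ξ₃, x₂(t)=B−(1/(2ξ₃))sin(2ξ₃t+φ), x₃(t)=C+t/(4ξ₃)+(1/(16ξ₃²))sin(2(2ξ₃t+φ))+(ξ₂/(2ξ₃²))sin(2ξ₃t+φ), together with ξ₁(t)=−(1/2)sin(2ξ₃t+φ) and the constant momenta ξ₂,ξ₃, define a global solution of the Heisenberg bicharacteristic system satisfying g*(x(t),ξ(t))=1/4 for all t∈ℝ. -/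
open Real

lemma hasDerivAt_mul_add (a b t : ℝ) : HasDerivAt (fun t => a * t + b) a t := by
  simpa using ((hasDerivAt_id' t).const_mul a).add_const b

section Heisenberg

variable {ξ₂ ξ₃ : ℝ}

lemma heisenberg_ξ₂_sub_x₁_mul_ξ₃ (hξ₃ : ξ₃ ≠ 0) (c : ℝ) :
    ξ₂ - (1 / (2 * ξ₃) * c + ξ₂ / ξ₃) * ξ₃ = -(1 / 2) * c := by
  field_simp
  ring

variable (φ B C t : ℝ)

lemma hasDerivAt_heisenberg_x₁ (hξ₃ : ξ₃ ≠ 0) :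
    HasDerivAt (fun t => 1 / (2 * ξ₃) * cos (2 * ξ₃ * t + φ) + ξ₂ / ξ₃)
      (2 * (-(1 / 2) * sin (2 * ξ₃ * t + φ))) t := by
  refine (((hasDerivAt_mul_add (2 * ξ₃) φ t).cos.const_mul _).add_const _).congr_deriv ?_
  field_simp

lemma hasDerivAt_heisenberg_x₂ (hξ₃ : ξ₃ ≠ 0) :
    HasDerivAt (fun t => B - 1 / (2 * ξ₃) * sin (2 * ξ₃ * t + φ))
      (2 * (-(1 / 2) * cos (2 * ξ₃ * t + φ))) t := by
  refine ((hasDerivAt_const t B).sub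
    ((hasDerivAt_mul_add (2 * ξ₃) φ t).sin.const_mul _)).congr_deriv ?_
  field_simp
  ring

lemma hasDerivAt_heisenberg_x₃ (hξ₃ : ξ₃ ≠ 0) :
    HasDerivAt
      (fun t => C + t / (4 * ξ₃) + 1 / (16 * ξ₃ ^ 2) * sin (2 * (2 * ξ₃ * t + φ))
        + ξ₂ / (2 * ξ₃ ^ 2) * sin (2 * ξ₃ * t + φ))
      (-2 * (1 / (2 * ξ₃) * cos (2 * ξ₃ * t + φ) + ξ₂ / ξ₃)
        * (-(1 / 2) * cos (2 * ξ₃ * t + φ))) t := by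
  have hθ := hasDerivAt_mul_add (2 * ξ₃) φ t
  refine ((((hasDerivAt_const t C).add ((hasDerivAt_id' t).div_const _)).add
    ((hθ.const_mul 2).sin.const_mul _)).add (hθ.sin.const_mul _)).congr_deriv ?_
  rw [cos_two_mul]
  field_simp
  ring

lemma hasDerivAt_heisenberg_ξ₁ :
    HasDerivAt (fun t => -(1 / 2) * sin (2 * ξ₃ * t + φ))
      (2 * ξ₃ * (-(1 / 2) * cos (2 * ξ₃ * t + φ))) t :=
  ((hasDerivAt_mul_add (2 * ξ₃) φ t).sin.const_mul _).congr_deriv (by ring)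

end Heisenberg

/-- The explicit curves with constants ξ₂, ξ₃ ≠ 0, φ, B, C define a global solution of the
Heisenberg bicharacteristic system with `g* ≡ 1/4`. -/
theorem stmt_3 (ξ₂ ξ₃ φ B C : ℝ) (hξ₃ : ξ₃ ≠ 0) :
    HeisenbergBichar
      (fun t => 1 / (2 * ξ₃) * Real.cos (2 * ξ₃ * t + φ) + ξ₂ / ξ₃)
      (fun t => B - 1 / (2 * ξ₃) * Real.sin (2 * ξ₃ * t + φ))
      (fun t => C + t / (4 * ξ₃) + 1 / (16 * ξ₃ ^ 2) * Real.sin (2 * (2 * ξ₃ * t + φ))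
          + ξ₂ / (2 * ξ₃ ^ 2) * Real.sin (2 * ξ₃ * t + φ))
      (fun t => -(1 / 2) * Real.sin (2 * ξ₃ * t + φ))
      (fun _ => ξ₂)
      (fun _ => ξ₃)
      Set.univ ∧
    ∀ t : ℝ,
      (-(1 / 2) * Real.sin (2 * ξ₃ * t + φ)) ^ 2 +
        (ξ₂ - (1 / (2 * ξ₃) * Real.cos (2 * ξ₃ * t + φ) + ξ₂ / ξ₃) * ξ₃) ^ 2 = 1 / 4 := by
  refine ⟨fun t _ => ?_, fun t => ?_⟩ <;>
    simp only [heisenberg_ξ₂_sub_x₁_mul_ξ₃ hξ₃]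
  · exact ⟨hasDerivAt_heisenberg_x₁ φ t hξ₃, hasDerivAt_heisenberg_x₂ φ B t hξ₃,
      hasDerivAt_heisenberg_x₃ φ C t hξ₃, hasDerivAt_heisenberg_ξ₁ φ t,
      hasDerivAt_const t ξ₂, hasDerivAt_const t ξ₃⟩
  · linear_combination (1 / 4 : ℝ) * sin_sq_add_cos_sq (2 * ξ₃ * t + φ)
end

section
/- Let (x,ξ):ℝ→ℝ³×ℝ³ be any solution of the Heisenberg bicharacteristic system with g*(x(t),ξ(t))=1/4 for all t and with constant momentum ξ₃≠0. Then for every t∈ℝ one has the drift estimate |x₃(t)−x₃(0)−t/(4ξ₃)| ≤ 1/(8ξ₃²)+|ξ₂|/ξ₃². In particular, x₃ drifts at average speed 1/(4ξ₃) up to a uniformly bounded oscillation. -/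
noncomputable def driftOscillation (b ξ η : ℝ) : ℝ := ξ * η / 2 - b * ξ

theorem abs_driftOscillation_le {b ξ η r : ℝ} (h : ξ ^ 2 + η ^ 2 ≤ r ^ 2) (hr : 0 ≤ r) :
    |driftOscillation b ξ η| ≤ r ^ 2 / 4 + |b| * r := by
  have hξη : |ξ * η| ≤ r ^ 2 / 2 := by
    rw [abs_le]
    constructor <;> nlinarith [sq_nonneg (ξ - η), sq_nonneg (ξ + η)]
  have hξ : |ξ| ≤ r := abs_le_of_sq_le_sq (by nlinarith [sq_nonneg η]) hr
  calc |ξ * η / 2 - b * ξ| ≤ |ξ * η| / 2 + |b| * |ξ| := by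
        simpa only [abs_div, abs_two, abs_mul] using abs_sub (ξ * η / 2) (b * ξ)
    _ ≤ r ^ 2 / 4 + |b| * r := by linarith [mul_le_mul_of_nonneg_left hξ (abs_nonneg b)]

namespace HeisenbergBichar

variable {x₁ x₂ x₃ ξ₁ ξ₂ ξ₃ : ℝ → ℝ}

theorem ξ₂_eq (hsol : HeisenbergBichar x₁ x₂ x₃ ξ₁ ξ₂ ξ₃ Set.univ) (t s : ℝ) : ξ₂ t = ξ₂ s :=
  is_const_of_deriv_eq_zero (fun u => (hsol u trivial).2.2.2.2.1.differentiableAt)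
    (fun u => (hsol u trivial).2.2.2.2.1.deriv) t s

theorem hasDerivAt_drift_sub_driftOscillation {I : Set ℝ} {t b c : ℝ}
    (hsol : HeisenbergBichar x₁ x₂ x₃ ξ₁ ξ₂ ξ₃ I) (ht : t ∈ I) (hc : c ≠ 0)
    (hξ₂ : ξ₂ t = b) (hξ₃ : ξ₃ t = c) :
    HasDerivAt (fun s => x₃ s - s / (4 * c) - driftOscillation b (ξ₁ s) (b - x₁ s * c) / c ^ 2)
      ((ξ₁ t ^ 2 + (b - x₁ t * c) ^ 2 - 1 / 4) / c) t := by
  obtain ⟨hx₁, -, hx₃, hξ₁, -⟩ := hsol t ht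
  rw [hξ₂, hξ₃] at hx₃ hξ₁
  have hη : HasDerivAt (fun s => b - x₁ s * c) (-(2 * ξ₁ t * c)) t := by
    simpa using (hx₁.mul_const c).const_sub b
  have hlin : HasDerivAt (fun s : ℝ => s / (4 * c)) (1 / (4 * c)) t := by
    simpa using (hasDerivAt_id t).div_const (4 * c)
  refine ((hx₃.sub hlin).sub
    ((((hξ₁.mul hη).div_const 2).sub (hξ₁.const_mul b)).div_const (c ^ 2))).congr_deriv ?_
  field_simp
  ring

end HeisenbergBichar

/-- Any global solution of the Heisenberg bicharacteristic system with `g* ≡ 1/4` and constant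
momentum ξ₃ = c ≠ 0 satisfies the drift estimate
`|x₃(t) - x₃(0) - t/(4c)| ≤ 1/(8c²) + |ξ₂|/c²`. -/
theorem stmt_4 (x₁ x₂ x₃ ξ₁ ξ₂ ξ₃ : ℝ → ℝ)
    (hsol : HeisenbergBichar x₁ x₂ x₃ ξ₁ ξ₂ ξ₃ Set.univ)
    (hg : ∀ t : ℝ, (ξ₁ t) ^ 2 + (ξ₂ t - x₁ t * ξ₃ t) ^ 2 = 1 / 4)
    (c : ℝ) (hc : c ≠ 0) (hξ₃ : ∀ t, ξ₃ t = c) :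
    ∀ t : ℝ, |x₃ t - x₃ 0 - t / (4 * c)| ≤ 1 / (8 * c ^ 2) + |ξ₂ 0| / c ^ 2 := by
  intro t
  set b := ξ₂ 0
  have hξ₂ (s : ℝ) : ξ₂ s = b := hsol.ξ₂_eq s 0
  have henergy (s : ℝ) : ξ₁ s ^ 2 + (b - x₁ s * c) ^ 2 = 1 / 4 := by
    rw [← hξ₂ s, ← hξ₃ s, hg s]
  set osc : ℝ → ℝ := fun s => driftOscillation b (ξ₁ s) (b - x₁ s * c)
  have hinvariant (s : ℝ) : HasDerivAt (fun s => x₃ s - s / (4 * c) - osc s / c ^ 2) 0 s :=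
    (hsol.hasDerivAt_drift_sub_driftOscillation (Set.mem_univ s) hc (hξ₂ s) (hξ₃ s)).congr_deriv
      (by rw [henergy s, sub_self, zero_div])
  have hdrift : x₃ t - x₃ 0 - t / (4 * c) = (osc t - osc 0) / c ^ 2 := by
    have := is_const_of_deriv_eq_zero (fun s => (hinvariant s).differentiableAt)
      (fun s => (hinvariant s).deriv) t 0
    simp only [zero_div, sub_zero] at this
    rw [sub_div]
    linarith
  have hosc (s : ℝ) : |osc s| ≤ (1 / 2) ^ 2 / 4 + |b| * (1 / 2) :=
    abs_driftOscillation_le (by rw [henergy s]; norm_num) (by norm_num)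
  calc |x₃ t - x₃ 0 - t / (4 * c)| = |osc t - osc 0| / c ^ 2 := by
        rw [hdrift, abs_div, abs_of_pos (by positivity : (0 : ℝ) < c ^ 2)]
    _ ≤ (|osc t| + |osc 0|) / c ^ 2 := by gcongr; exact abs_sub _ _
    _ ≤ 2 * ((1 / 2) ^ 2 / 4 + |b| * (1 / 2)) / c ^ 2 := by gcongr; linarith [hosc t, hosc 0]
    _ = 1 / (8 * c ^ 2) + |b| / c ^ 2 := by field_simp; ring
end

section
/- Let n,m≥1, let 1≤n₁≤n₂≤n, and let a_{ij}:ℝⁿ→ℝ (1≤i≤n, 1≤j≤m) be smooth functions such that for every k with n₁+1≤k≤n and every i≤n₂ the partial derivative ∂a_{ij}/∂x_k vanishes identically (i.e., a_{ij} may depend on the variables x_{n₁+1},…,x_n only when i≥n₂+1). Define the Hamiltonian g*(x,ξ)=Σ_{j=1}^m (Σ_{i=1}^n a_{ij}(x)ξ_i)² and let (x(t),ξ(t)) be a solution on an interval I∋0 of the Hamiltonian system ẋ=∇_ξ g*, ξ̇=−∇_x g*. If ξ_k(0)=0 for every k≥n₂+1, then ξ_k(t)=0 for every k≥n₂+1 and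 every t∈I, and moreover ξ̇_k(t)=0 for every k≥n₁+1 and every t∈I. -/
open scoped BigOperators

open Set

/-- An algebraic rearrangement: pulling the sum over `i` outside. -/
lemma aux_sum_rearrange {n m : ℕ} (σ : ℝ) (φ : Fin m → ℝ) (d : Fin n → Fin m → ℝ)
    (v : Fin n → ℝ) :
    σ * -(∑ j : Fin m, 2 * φ j * (∑ i : Fin n, d i j * v i))
      = ∑ i : Fin n, (σ * -(∑ j : Fin m, 2 * φ j * d i j)) * v i := by
  have h1 : ∀ j, 2 * φ j * (∑ i : Fin n, d i j * v i) = ∑ i : Fin n, 2 * φ j * d i j * v i := by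
    intro j; rw [Finset.mul_sum]; exact Finset.sum_congr rfl fun i _ => by ring
  simp only [h1, mul_neg, ← neg_mul, Finset.mul_sum, Finset.sum_mul]
  rw [Finset.sum_comm, ← Finset.sum_neg_distrib]
  refine Finset.sum_congr rfl fun i _ => ?_
  rw [← Finset.sum_neg_distrib, ← Finset.sum_neg_distrib, Finset.sum_mul]
  exact Finset.sum_congr rfl fun j _ => by ring

/-- A Gronwall-type lemma: a scalar function vanishing at `0` with `|E'| ≤ B * |E|` on
`[0, T]` (with `B` continuous) vanishes on `[0, T]`. -/
lemma aux_gronwall_zero (Efun E' B : ℝ → ℝ) (T : ℝ) (hT : 0 ≤ T)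
    (hE : ∀ s ∈ Set.Icc 0 T, HasDerivAt Efun (E' s) s)
    (hB : ContinuousOn B (Set.Icc 0 T))
    (hbound : ∀ s ∈ Set.Icc 0 T, |E' s| ≤ B s * |Efun s|)
    (h0 : Efun 0 = 0) : ∀ s ∈ Set.Icc 0 T, Efun s = 0 := by
  obtain ⟨s₀, hs₀mem, hs₀⟩ :=
    isCompact_Icc.exists_isMaxOn (⟨0, Set.left_mem_Icc.2 hT⟩ : (Set.Icc (0:ℝ) T).Nonempty) hB
  have key := norm_le_gronwallBound_of_norm_deriv_right_le (f := Efun) (f' := E')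
    (δ := 0) (K := B s₀) (ε := 0) (a := 0) (b := T)
    (fun s hs => (hE s hs).continuousAt.continuousWithinAt)
    (fun s hs => (hE s (Set.Ico_subset_Icc_self hs)).hasDerivWithinAt)
    (by simp [h0])
    (fun s hs => by
      have h1 := hbound s (Set.Ico_subset_Icc_self hs)
      have h2 : B s ≤ B s₀ := hs₀ (Set.Ico_subset_Icc_self hs)
      have h3 : (0:ℝ) ≤ |Efun s| := abs_nonneg _
      calc ‖E' s‖ = |E' s| := Real.norm_eq_abs _
        _ ≤ B s * |Efun s| := h1
        _ ≤ B s₀ * |Efun s| := mul_le_mul_of_nonneg_right h2 h3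
        _ = B s₀ * ‖Efun s‖ + 0 := by rw [Real.norm_eq_abs]; ring)
  intro s hs
  have h4 := key s hs
  rw [gronwallBound_ε0_δ0] at h4
  have h5 := le_antisymm h4 (norm_nonneg _)
  simpa using h5

/-- The core argument: on a forward interval `[0, T]`, if the momenta with index `≥ n₂`
vanish initially, they vanish identically on `[0, T]`.  The sign `σ` allows applying this to
the time-reversed system as well. -/
lemma aux_claim (n m n₂ : ℕ) (a : Fin n → Fin m → (Fin n → ℝ) → ℝ)
    (ha : ∀ i j, ContDiff ℝ (⊤ : ℕ∞) (a i j))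
    (hdep : ∀ (i : Fin n) (j : Fin m) (k : Fin n), (i : ℕ) < n₂ → n₂ ≤ (k : ℕ) →
      ∀ y : Fin n → ℝ, fderiv ℝ (a i j) y (Pi.single k 1) = 0)
    (T σ : ℝ) (hT : 0 ≤ T) (x ξ : ℝ → Fin n → ℝ)
    (hxc : ∀ t ∈ Set.Icc 0 T, ContinuousAt x t)
    (hξ : ∀ t ∈ Set.Icc 0 T, ∀ k : Fin n,
      HasDerivAt (fun s => ξ s k)
        (σ * -(∑ j : Fin m, 2 * (∑ i : Fin n, a i j (x t) * ξ t i) *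
            (∑ i : Fin n, fderiv ℝ (a i j) (x t) (Pi.single k 1) * ξ t i))) t)
    (hinit : ∀ k : Fin n, n₂ ≤ (k : ℕ) → ξ 0 k = 0) :
    ∀ t ∈ Set.Icc 0 T, ∀ k : Fin n, n₂ ≤ (k : ℕ) → ξ t k = 0 := by
  classical
  set F : Finset (Fin n) := Finset.univ.filter (fun k => n₂ ≤ (k : ℕ)) with hF
  have hmemF : ∀ k : Fin n, k ∈ F ↔ n₂ ≤ (k : ℕ) := by
    intro k; simp [hF]
  set D : Fin n → ℝ → ℝ := fun k t =>
    σ * -(∑ j : Fin m, 2 * (∑ i : Fin n, a i j (x t) * ξ t i) *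
      (∑ i : Fin n, fderiv ℝ (a i j) (x t) (Pi.single k 1) * ξ t i)) with hD
  set g : Fin n → Fin n → ℝ → ℝ := fun k i t =>
    σ * -(∑ j : Fin m, 2 * (∑ l : Fin n, a l j (x t) * ξ t l) *
      fderiv ℝ (a i j) (x t) (Pi.single k 1)) with hg
  set Efun : ℝ → ℝ := fun t => ∑ k ∈ F, ξ t k ^ 2 with hEfun
  set E' : ℝ → ℝ := fun t => ∑ k ∈ F, 2 * ξ t k * D k t with hE'
  set B : ℝ → ℝ := fun t => ∑ k ∈ F, ∑ i ∈ F, 2 * |g k i t| with hBdef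
  -- splitting the derivative as a linear combination of the ξ i, i ∈ F
  have hsplit : ∀ t, ∀ k ∈ F, D k t = ∑ i ∈ F, g k i t * ξ t i := by
    intro t k hk
    have hk' : n₂ ≤ (k : ℕ) := (hmemF k).1 hk
    have step1 : D k t = ∑ i : Fin n, g k i t * ξ t i := by
      simp only [hD, hg]
      exact aux_sum_rearrange σ (fun j => ∑ l : Fin n, a l j (x t) * ξ t l)
        (fun i j => fderiv ℝ (a i j) (x t) (Pi.single k 1)) (ξ t)
    rw [step1]
    symm
    apply Finset.sum_subset (Finset.subset_univ F)
    intro i _ hiF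
    have hi : (i : ℕ) < n₂ := by
      by_contra h
      exact hiF ((hmemF i).2 (le_of_not_gt h))
    have hz : ∀ j : Fin m, fderiv ℝ (a i j) (x t) (Pi.single k 1) = 0 :=
      fun j => hdep i j k hi hk' (x t)
    simp [hg, hz]
  -- continuity of ξ
  have hξc : ∀ t ∈ Set.Icc 0 T, ∀ k, ContinuousAt (fun s => ξ s k) t :=
    fun t ht k => (hξ t ht k).continuousAt
  -- continuity of B
  have hBc : ContinuousOn B (Set.Icc 0 T) := by
    refine continuousOn_of_forall_continuousAt fun t ht => ?_
    have hterm : ∀ k i : Fin n, ContinuousAt (fun s => 2 * |g k i s|) t := by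
      intro k i
      refine ContinuousAt.mul continuousAt_const (ContinuousAt.abs ?_)
      have hgk : ContinuousAt (g k i) t := by
        simp only [hg]
        refine ContinuousAt.mul continuousAt_const (ContinuousAt.neg ?_)
        have hsum : ∀ j : Fin m,
            ContinuousAt (fun s => 2 * (∑ l : Fin n, a l j (x s) * ξ s l) *
              fderiv ℝ (a i j) (x s) (Pi.single k 1)) t := by
          intro j
          have h1 : ContinuousAt (fun s => ∑ l : Fin n, a l j (x s) * ξ s l) t := by
            have : ∀ l : Fin n, ContinuousAt (fun s => a l j (x s) * ξ s l) t := fun l =>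
              ((ha l j).continuous.continuousAt.comp (hxc t ht)).mul (hξc t ht l)
            exact tendsto_finset_sum _ fun l _ => this l
          have h2 : Continuous fun y : Fin n → ℝ => fderiv ℝ (a i j) y (Pi.single k 1) :=
            ((ha i j).continuous_fderiv (by simp)).clm_apply continuous_const
          exact (continuousAt_const.mul h1).mul (h2.continuousAt.comp (hxc t ht))
        exact tendsto_finset_sum _ fun j _ => hsum j
      exact hgk
    have : ∀ k : Fin n, ContinuousAt (fun s => ∑ i ∈ F, 2 * |g k i s|) t := fun k =>
      tendsto_finset_sum _ fun i _ => hterm k i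
    exact tendsto_finset_sum _ fun k _ => this k
  -- derivative of the energy
  have hEd : ∀ t ∈ Set.Icc 0 T, HasDerivAt Efun (E' t) t := by
    intro t ht
    refine HasDerivAt.fun_sum fun k _ => ?_
    have h := (hξ t ht k).fun_pow 2
    simpa [hD, mul_comm, mul_assoc, mul_left_comm] using h
  -- the Gronwall bound
  have hbound : ∀ s ∈ Set.Icc 0 T, |E' s| ≤ B s * |Efun s| := by
    intro s hs
    have hEnn : (0:ℝ) ≤ Efun s := Finset.sum_nonneg fun k _ => sq_nonneg _
    have habs : |Efun s| = Efun s := abs_of_nonneg hEnn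
    have hsq : ∀ k ∈ F, ξ s k ^ 2 ≤ Efun s := fun k hk =>
      Finset.single_le_sum (fun i _ => sq_nonneg (ξ s i)) hk
    have hprod : ∀ k ∈ F, ∀ i ∈ F, |ξ s k * ξ s i| ≤ Efun s := by
      intro k hk i hi
      have h1 := hsq k hk
      have h2 := hsq i hi
      rw [abs_le]
      constructor
      · nlinarith [sq_nonneg (ξ s k + ξ s i)]
      · nlinarith [sq_nonneg (ξ s k - ξ s i)]
    have hrw : E' s = ∑ k ∈ F, ∑ i ∈ F, 2 * g k i s * (ξ s k * ξ s i) := by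
      refine Finset.sum_congr rfl fun k hk => ?_
      rw [mul_assoc, hsplit s k hk, Finset.mul_sum, Finset.mul_sum]
      refine Finset.sum_congr rfl fun i _ => ?_
      ring
    calc |E' s| ≤ ∑ k ∈ F, |∑ i ∈ F, 2 * g k i s * (ξ s k * ξ s i)| := by
          rw [hrw]; exact Finset.abs_sum_le_sum_abs _ _
      _ ≤ ∑ k ∈ F, ∑ i ∈ F, |2 * g k i s * (ξ s k * ξ s i)| :=
          Finset.sum_le_sum fun k _ => Finset.abs_sum_le_sum_abs _ _
      _ ≤ ∑ k ∈ F, ∑ i ∈ F, 2 * |g k i s| * Efun s := by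
          refine Finset.sum_le_sum fun k hk => Finset.sum_le_sum fun i hi => ?_
          rw [abs_mul, abs_mul, abs_two, mul_assoc, mul_assoc]
          refine mul_le_mul_of_nonneg_left ?_ (by norm_num)
          exact mul_le_mul_of_nonneg_left (hprod k hk i hi) (abs_nonneg _)
      _ = B s * |Efun s| := by
          rw [habs, hBdef]
          simp only [Finset.sum_mul]
  -- initial condition
  have hE0 : Efun 0 = 0 := by
    refine Finset.sum_eq_zero fun k hk => ?_
    rw [hinit k ((hmemF k).1 hk)]; ring
  have hzero := aux_gronwall_zero Efun E' B T hT hEd hBc hbound hE0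
  intro t ht k hk
  have hEt : Efun t = 0 := hzero t ht
  have hall := (Finset.sum_eq_zero_iff_of_nonneg (fun i _ => sq_nonneg (ξ t i))).1 hEt
  have hk2 := hall k ((hmemF k).2 hk)
  exact pow_eq_zero_iff (two_ne_zero) |>.1 hk2

/-- Claim 1 in the proof of existence of spiraling normal geodesics: for the Hamiltonian
`g*(x,ξ) = Σ_j (Σ_i a_{ij}(x) ξ_i)²`, where the coefficients `a_{ij}` with `i ≤ n₂` (1-based) do
not depend on the variables `x_k`, `k ≥ n₁+1` (1-based), any solution of the Hamiltonian system
whose momenta `ξ_k(0)` vanish for `k ≥ n₂+1` has `ξ_k ≡ 0` for `k ≥ n₂+1` and `ξ̇_k ≡ 0` for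
`k ≥ n₁+1`.  (Indices are 0-based in this formalization: `i ≤ n₂` becomes `(i:ℕ) < n₂`, and
`k ≥ n₁+1` becomes `n₁ ≤ (k:ℕ)`.) -/
theorem stmt_5 (n m n₁ n₂ : ℕ) (hn : 1 ≤ n) (hm : 1 ≤ m)
    (hn₁ : 1 ≤ n₁) (h₁₂ : n₁ ≤ n₂) (h₂n : n₂ ≤ n)
    (a : Fin n → Fin m → (Fin n → ℝ) → ℝ)
    (ha : ∀ i j, ContDiff ℝ (⊤ : ℕ∞) (a i j))
    (hdep : ∀ (i : Fin n) (j : Fin m) (k : Fin n), (i : ℕ) < n₂ → n₁ ≤ (k : ℕ) →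
      ∀ x : Fin n → ℝ, fderiv ℝ (a i j) x (Pi.single k 1) = 0)
    (I : Set ℝ) (hI : I.OrdConnected) (h0 : (0 : ℝ) ∈ I)
    (x ξ : ℝ → Fin n → ℝ)
    (hx : ∀ t ∈ I, ∀ k : Fin n,
      HasDerivAt (fun s => x s k)
        (∑ j : Fin m, 2 * (∑ i : Fin n, a i j (x t) * ξ t i) * a k j (x t)) t)
    (hξ : ∀ t ∈ I, ∀ k : Fin n,
      HasDerivAt (fun s => ξ s k)
        (-(∑ j : Fin m, 2 * (∑ i : Fin n, a i j (x t) * ξ t i) *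
            (∑ i : Fin n, fderiv ℝ (a i j) (x t) (Pi.single k 1) * ξ t i))) t)
    (hinit : ∀ k : Fin n, n₂ ≤ (k : ℕ) → ξ 0 k = 0) :
    (∀ t ∈ I, ∀ k : Fin n, n₂ ≤ (k : ℕ) → ξ t k = 0) ∧
    (∀ t ∈ I, ∀ k : Fin n, n₁ ≤ (k : ℕ) → HasDerivAt (fun s => ξ s k) 0 t) := by
  classical
  have hdep' : ∀ (i : Fin n) (j : Fin m) (k : Fin n), (i : ℕ) < n₂ → n₂ ≤ (k : ℕ) →
      ∀ y : Fin n → ℝ, fderiv ℝ (a i j) y (Pi.single k 1) = 0 :=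
    fun i j k hi hk y => hdep i j k hi (le_trans h₁₂ hk) y
  have part1 : ∀ t ∈ I, ∀ k : Fin n, n₂ ≤ (k : ℕ) → ξ t k = 0 := by
    intro t ht k hk
    rcases le_or_gt 0 t with h | h
    · -- forward in time
      have hsub : Set.Icc (0:ℝ) t ⊆ I := hI.out h0 ht
      have key := aux_claim n m n₂ a ha hdep' t 1 h x ξ
        (fun s hs => continuousAt_pi.2 fun l => (hx s (hsub hs) l).continuousAt)
        (fun s hs l => by
          have h' := hξ s (hsub hs) l
          simpa [one_mul] using h')
        hinit
      exact key t (Set.mem_Icc.2 ⟨h, le_refl t⟩) k hk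
    · -- backward in time: time reversal
      have hsub : Set.Icc t (0:ℝ) ⊆ I := hI.out ht h0
      have hmem : ∀ s ∈ Set.Icc (0:ℝ) (-t), -s ∈ I := fun s hs =>
        hsub ⟨by linarith [hs.2], by linarith [hs.1]⟩
      have key := aux_claim n m n₂ a ha hdep' (-t) (-1) (by linarith)
        (fun s => x (-s)) (fun s => ξ (-s))
        (fun s hs => by
          have hxc : ContinuousAt x (-s) := continuousAt_pi.2 fun l =>
            (hx (-s) (hmem s hs) l).continuousAt
          exact hxc.comp (continuous_neg.continuousAt))
        (fun s hs l => by
          have h' := (hξ (-s) (hmem s hs) l).comp s (hasDerivAt_neg s)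
          simpa [Function.comp_def, mul_comm] using h')
        (fun l hl => by simpa using hinit l hl)
      have := key (-t) (Set.mem_Icc.2 ⟨by linarith, le_refl _⟩) k hk
      simpa using this
  refine ⟨part1, ?_⟩
  intro t ht k hk
  have hD0 : -(∑ j : Fin m, 2 * (∑ i : Fin n, a i j (x t) * ξ t i) *
      (∑ i : Fin n, fderiv ℝ (a i j) (x t) (Pi.single k 1) * ξ t i)) = 0 := by
    rw [neg_eq_zero]
    refine Finset.sum_eq_zero fun j _ => ?_
    have hinner : (∑ i : Fin n, fderiv ℝ (a i j) (x t) (Pi.single k 1) * ξ t i) = 0 := by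
      refine Finset.sum_eq_zero fun i _ => ?_
      rcases lt_or_ge (i : ℕ) n₂ with hi | hi
      · rw [hdep i j k hi hk (x t), zero_mul]
      · rw [part1 t ht i hi, mul_zero]
    rw [hinner, mul_zero]
  have h' := hξ t ht k
  rwa [hD0] at h'
end

section
/- Let n,m≥1, let 1≤n₁≤n₂≤n, and let a_{ij}:ℝⁿ→ℝ (1≤i≤n, 1≤j≤m) be smooth functions such that for every k with n₁+1≤k≤n and every i≤n₂ the partial derivative ∂a_{ij}/∂x_k vanishes identically. Define g*(x,ξ)=Σ_{j=1}^m (Σ_{i=1}^n a_{ij}(x)ξ_i)² and the reduced Hamiltonian g*_red(x,ξ)=Σ_{j=1}^m (Σ_{i=1}^{n₂} a_{ij}(x)ξ_i)², where the inner sum is truncated at i=n₂. Let (x(t),ξ(t)) solve the Hamiltonian system of g* on an interval I∋0 with ξ_k(0)=0 for every k≥n₂+1, and let (x^r(t),ξ^r(t)) solve the Hamiltonian system of g*_red on I with the same initial data (x^r(0),ξ^r(0))=(x(0),ξ(0)). Then for every t∈I and every i≤n₂ one has x_i(t)=x_i^r(t) and ξ_i(t)=ξ_i^r(t). -/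
open scoped BigOperators

open Set Metric

theorem myODE_unique {E : Type*} [NormedAddCommGroup E] [NormedSpace ℝ E]
    {v : ℝ → E → E} {s : ℝ → Set E} {K : NNReal}
    (hv : ∀ t, LipschitzOnWith K (v t) (s t))
    {f g : ℝ → E} {A B t₀ : ℝ} (ht₀ : t₀ ∈ Set.Icc A B)
    (hf : ∀ t ∈ Set.Icc A B, HasDerivAt f (v t (f t)) t)
    (hfs : ∀ t ∈ Set.Icc A B, f t ∈ s t)
    (hg : ∀ t ∈ Set.Icc A B, HasDerivAt g (v t (g t)) t)
    (hgs : ∀ t ∈ Set.Icc A B, g t ∈ s t)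
    (heq : f t₀ = g t₀) : Set.EqOn f g (Set.Icc A B) := by
  have hsub1 : Set.Icc A t₀ ⊆ Set.Icc A B := Icc_subset_Icc_right ht₀.2
  have hsub2 : Set.Icc t₀ B ⊆ Set.Icc A B := Icc_subset_Icc_left ht₀.1
  have h1 : Set.EqOn f g (Set.Icc A t₀) :=
    ODE_solution_unique_of_mem_Icc_left (fun t _ => hv t)
      (fun t ht => (hf t (hsub1 ht)).continuousAt.continuousWithinAt)
      (fun t ht => (hf t (hsub1 (Ioc_subset_Icc_self ht))).hasDerivWithinAt)
      (fun t ht => hfs t (hsub1 (Ioc_subset_Icc_self ht)))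
      (fun t ht => (hg t (hsub1 ht)).continuousAt.continuousWithinAt)
      (fun t ht => (hg t (hsub1 (Ioc_subset_Icc_self ht))).hasDerivWithinAt)
      (fun t ht => hgs t (hsub1 (Ioc_subset_Icc_self ht)))
      heq
  have h2 : Set.EqOn f g (Set.Icc t₀ B) :=
    ODE_solution_unique_of_mem_Icc_right (fun t _ => hv t)
      (fun t ht => (hf t (hsub2 ht)).continuousAt.continuousWithinAt)
      (fun t ht => (hf t (hsub2 (Ico_subset_Icc_self ht))).hasDerivWithinAt)
      (fun t ht => hfs t (hsub2 (Ico_subset_Icc_self ht)))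
      (fun t ht => (hg t (hsub2 ht)).continuousAt.continuousWithinAt)
      (fun t ht => (hg t (hsub2 (Ico_subset_Icc_self ht))).hasDerivWithinAt)
      (fun t ht => hgs t (hsub2 (Ico_subset_Icc_self ht)))
      heq
  intro t ht
  rcases le_total t t₀ with h | h
  · exact h1 ⟨ht.1, h⟩
  · exact h2 ⟨h, ht.2⟩

theorem my_sum_est {m n : ℕ} (c : Fin m → ℝ) (b : Fin m → Fin n → ℝ) (y y' : Fin n → ℝ) :
    |(∑ j, c j * (∑ i, b j i * y i)) - ∑ j, c j * (∑ i, b j i * y' i)|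
      ≤ (∑ j, |c j| * ∑ i, |b j i|) * dist y y' := by
  have hrw : (∑ j, c j * (∑ i, b j i * y i)) - ∑ j, c j * (∑ i, b j i * y' i)
      = ∑ j, c j * ∑ i, b j i * (y i - y' i) := by
    rw [← Finset.sum_sub_distrib]
    refine Finset.sum_congr rfl fun j _ => ?_
    rw [← mul_sub, ← Finset.sum_sub_distrib]
    congr 1
    exact Finset.sum_congr rfl fun i _ => by ring
  rw [hrw]
  calc |∑ j, c j * ∑ i, b j i * (y i - y' i)|
      ≤ ∑ j, |c j * ∑ i, b j i * (y i - y' i)| := Finset.abs_sum_le_sum_abs _ _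
    _ ≤ ∑ j, |c j| * ((∑ i, |b j i|) * dist y y') := by
        refine Finset.sum_le_sum fun j _ => ?_
        rw [abs_mul]
        refine mul_le_mul_of_nonneg_left ?_ (abs_nonneg _)
        calc |∑ i, b j i * (y i - y' i)| ≤ ∑ i, |b j i * (y i - y' i)| :=
              Finset.abs_sum_le_sum_abs _ _
          _ ≤ ∑ i, |b j i| * dist y y' := by
              refine Finset.sum_le_sum fun i _ => ?_
              rw [abs_mul]
              refine mul_le_mul_of_nonneg_left ?_ (abs_nonneg _)
              rw [← Real.dist_eq]
              exact dist_le_pi_dist y y' i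
          _ = (∑ i, |b j i|) * dist y y' := by rw [Finset.sum_mul]
    _ = (∑ j, |c j| * ∑ i, |b j i|) * dist y y' := by
        rw [Finset.sum_mul]
        exact Finset.sum_congr rfl fun j _ => by ring

noncomputable def lowProj (n n₁ : ℕ) : (Fin n → ℝ) →L[ℝ] (Fin n → ℝ) :=
  ContinuousLinearMap.pi (fun k => if (k : ℕ) < n₁ then ContinuousLinearMap.proj k else 0)

theorem lowProj_apply {n n₁ : ℕ} (p : Fin n → ℝ) (k : Fin n) :
    lowProj n n₁ p k = if (k : ℕ) < n₁ then p k else 0 := by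
  simp only [lowProj, ContinuousLinearMap.pi_apply]
  split_ifs <;> simp

theorem lowProj_single {n n₁ : ℕ} (k : Fin n) (hk : (k : ℕ) < n₁) :
    lowProj n n₁ (Pi.single k (1:ℝ)) = Pi.single k (1:ℝ) := by
  funext l
  rw [lowProj_apply]
  by_cases hl : (l : ℕ) < n₁
  · simp [hl]
  · have hlk : l ≠ k := by rintro rfl; exact hl hk
    simp [hl, Pi.single_apply, hlk]

theorem pi_single_decomp {n : ℕ} (w : Fin n → ℝ) :
    w = ∑ k, w k • (Pi.single k (1:ℝ) : Fin n → ℝ) := by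
  funext l
  simp [Finset.sum_apply, Pi.single_apply]

theorem fderiv_zero_of_high {n n₁ : ℕ} {f : (Fin n → ℝ) → ℝ}
    (hdep : ∀ k : Fin n, n₁ ≤ (k : ℕ) → ∀ p, fderiv ℝ f p (Pi.single k 1) = 0)
    (q : Fin n → ℝ) {w : Fin n → ℝ} (hw : ∀ k : Fin n, (k : ℕ) < n₁ → w k = 0) :
    fderiv ℝ f q w = 0 := by
  conv_lhs => rw [pi_single_decomp w]
  rw [map_sum]
  refine Finset.sum_eq_zero fun k _ => ?_
  rw [map_smul]
  rcases lt_or_ge (k : ℕ) n₁ with hk | hk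
  · rw [hw k hk]; simp
  · rw [hdep k hk q]; simp

theorem const_of_high {n n₁ : ℕ} {f : (Fin n → ℝ) → ℝ} (hf : ContDiff ℝ (⊤ : ℕ∞) f)
    (hdep : ∀ k : Fin n, n₁ ≤ (k : ℕ) → ∀ p, fderiv ℝ f p (Pi.single k 1) = 0)
    (p : Fin n → ℝ) : f (lowProj n n₁ p) = f p := by
  set w : Fin n → ℝ := lowProj n n₁ p - p with hwdef
  have hw : ∀ k : Fin n, (k : ℕ) < n₁ → w k = 0 := by
    intro k hk
    simp [hwdef, lowProj_apply, hk]
  have hdiff := hf.differentiable (by simp)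
  have hline : ∀ s : ℝ, HasDerivAt (fun s : ℝ => f (p + s • w)) 0 s := by
    intro s
    have h1 : HasDerivAt (fun s : ℝ => p + s • w) w s := by
      simpa using ((hasDerivAt_id s).smul_const w).const_add p
    have h2 := (hdiff (p + s • w)).hasFDerivAt.comp_hasDerivAt s h1
    rwa [fderiv_zero_of_high hdep _ hw] at h2
  have hconst : (fun s : ℝ => f (p + s • w)) 1 = (fun s : ℝ => f (p + s • w)) 0 :=
    is_const_of_deriv_eq_zero (fun s => (hline s).differentiableAt)
      (fun s => (hline s).deriv) 1 0
  simpa [hwdef] using hconst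

theorem fderiv_lowProj {n n₁ : ℕ} {f : (Fin n → ℝ) → ℝ} (hf : ContDiff ℝ (⊤ : ℕ∞) f)
    (hdep : ∀ k : Fin n, n₁ ≤ (k : ℕ) → ∀ p, fderiv ℝ f p (Pi.single k 1) = 0)
    (p : Fin n → ℝ) (k : Fin n) (hk : (k : ℕ) < n₁) :
    fderiv ℝ f p (Pi.single k 1) = fderiv ℝ f (lowProj n n₁ p) (Pi.single k 1) := by
  have hcomp : f ∘ (lowProj n n₁) = f := funext fun q => const_of_high hf hdep q
  have h1 : HasFDerivAt (f ∘ (lowProj n n₁))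
      ((fderiv ℝ f (lowProj n n₁ p)).comp (lowProj n n₁)) p :=
    ((hf.differentiable (by simp)) (lowProj n n₁ p)).hasFDerivAt.comp p
      (lowProj n n₁).hasFDerivAt
  rw [hcomp] at h1
  rw [h1.fderiv]
  simp only [ContinuousLinearMap.comp_apply]
  rw [lowProj_single k hk]

/-- Claim 2 (core) in the proof of existence of spiraling normal geodesics: with the structure
hypotheses on the coefficients `a_{ij}` (those with `i ≤ n₂`, 1-based, do not depend on
`x_k` for `k ≥ n₁+1`), the Hamiltonian flow of
`g*(x,ξ) = Σ_j (Σ_{i=1}^n a_{ij}(x)ξ_i)²` and that of the reduced Hamiltonian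
`g*_red(x,ξ) = Σ_j (Σ_{i=1}^{n₂} a_{ij}(x)ξ_i)²`, started from the same initial data whose
momenta `ξ_k(0)` vanish for `k ≥ n₂+1`, have the same coordinates `x_i` and momenta `ξ_i`
for every `i ≤ n₂`. (Indices are 0-based in this formalization.) -/
theorem stmt_6 (n m n₁ n₂ : ℕ) (hn : 1 ≤ n) (hm : 1 ≤ m)
    (hn₁ : 1 ≤ n₁) (h₁₂ : n₁ ≤ n₂) (h₂n : n₂ ≤ n)
    (a : Fin n → Fin m → (Fin n → ℝ) → ℝ)
    (ha : ∀ i j, ContDiff ℝ (⊤ : ℕ∞) (a i j))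
    (hdep : ∀ (i : Fin n) (j : Fin m) (k : Fin n), (i : ℕ) < n₂ → n₁ ≤ (k : ℕ) →
      ∀ x : Fin n → ℝ, fderiv ℝ (a i j) x (Pi.single k 1) = 0)
    (I : Set ℝ) (hI : I.OrdConnected) (h0 : (0 : ℝ) ∈ I)
    -- the solution of the Hamiltonian system of g*
    (x ξ : ℝ → Fin n → ℝ)
    (hx : ∀ t ∈ I, ∀ k : Fin n,
      HasDerivAt (fun s => x s k)
        (∑ j : Fin m, 2 * (∑ i : Fin n, a i j (x t) * ξ t i) * a k j (x t)) t)
    (hξ : ∀ t ∈ I, ∀ k : Fin n,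
      HasDerivAt (fun s => ξ s k)
        (-(∑ j : Fin m, 2 * (∑ i : Fin n, a i j (x t) * ξ t i) *
            (∑ i : Fin n, fderiv ℝ (a i j) (x t) (Pi.single k 1) * ξ t i))) t)
    -- the solution of the Hamiltonian system of the reduced g*_red
    (xr ξr : ℝ → Fin n → ℝ)
    (hxr : ∀ t ∈ I, ∀ k : Fin n,
      HasDerivAt (fun s => xr s k)
        (∑ j : Fin m, 2 * (∑ i : Fin n, if (i : ℕ) < n₂ then a i j (xr t) * ξr t i else 0) *
          (if (k : ℕ) < n₂ then a k j (xr t) else 0)) t)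
    (hξr : ∀ t ∈ I, ∀ k : Fin n,
      HasDerivAt (fun s => ξr s k)
        (-(∑ j : Fin m, 2 * (∑ i : Fin n, if (i : ℕ) < n₂ then a i j (xr t) * ξr t i else 0) *
            (∑ i : Fin n,
              if (i : ℕ) < n₂ then fderiv ℝ (a i j) (xr t) (Pi.single k 1) * ξr t i else 0))) t)
    -- vanishing of the high momenta at time 0, and same initial data
    (hinit : ∀ k : Fin n, n₂ ≤ (k : ℕ) → ξ 0 k = 0)
    (hx0 : xr 0 = x 0) (hξ0 : ξr 0 = ξ 0) :
    ∀ t ∈ I, ∀ i : Fin n, (i : ℕ) < n₂ → x t i = xr t i ∧ ξ t i = ξr t i := by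
  classical
  -- continuity of the solutions
  have hxC : ∀ t ∈ I, ContinuousAt x t := fun t ht =>
    continuousAt_pi.2 fun k => (hx t ht k).continuousAt
  have hξC : ∀ t ∈ I, ContinuousAt ξ t := fun t ht =>
    continuousAt_pi.2 fun k => (hξ t ht k).continuousAt
  have hxrC : ∀ t ∈ I, ContinuousAt xr t := fun t ht =>
    continuousAt_pi.2 fun k => (hxr t ht k).continuousAt
  have hξrC : ∀ t ∈ I, ContinuousAt ξr t := fun t ht =>
    continuousAt_pi.2 fun k => (hξr t ht k).continuousAt
  -- Step A : the high momenta vanish identically for the full system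
  have hhigh : ∀ t ∈ I, ∀ k : Fin n, n₂ ≤ (k : ℕ) → ξ t k = 0 := by
    intro t₁ ht₁ k₀ hk₀
    set A := min 0 t₁ with hA
    set B := max 0 t₁ with hB
    have hAI : A ∈ I := by
      rcases le_total 0 t₁ with h | h
      · rwa [hA, min_eq_left h]
      · rwa [hA, min_eq_right h]
    have hBI : B ∈ I := by
      rcases le_total 0 t₁ with h | h
      · rwa [hB, max_eq_right h]
      · rwa [hB, max_eq_left h]
    have hIcc : Icc A B ⊆ I := hI.out hAI hBI
    have h0AB : (0:ℝ) ∈ Icc A B := ⟨min_le_left _ _, le_max_left _ _⟩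
    have ht1AB : t₁ ∈ Icc A B := ⟨min_le_right _ _, le_max_right _ _⟩
    have hAB : A ≤ B := h0AB.1.trans h0AB.2
    set cl : ℝ → ℝ := fun t => max A (min B t) with hcl
    have hclmem : ∀ t, cl t ∈ Icc A B := fun t =>
      ⟨le_max_left _ _, max_le hAB (min_le_left _ _)⟩
    have hcleq : ∀ t ∈ Icc A B, cl t = t := by
      intro t ht
      rw [hcl]
      simp only
      rw [min_eq_right ht.2, max_eq_right ht.1]
    set cc : Fin m → ℝ → ℝ := fun j t => 2 * ∑ i, a i j (x t) * ξ t i with hcc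
    set bb : Fin n → Fin m → Fin n → ℝ → ℝ := fun k j i t =>
      if n₂ ≤ (i : ℕ) then fderiv ℝ (a i j) (x t) (Pi.single k 1) else 0 with hbb
    set vA : ℝ → (Fin n → ℝ) → (Fin n → ℝ) := fun t y k =>
      if n₂ ≤ (k : ℕ) then ∑ j, (-(cc j (cl t))) * ∑ i, bb k j i (cl t) * y i else 0 with hvA
    set η : ℝ → Fin n → ℝ := fun t k => if n₂ ≤ (k : ℕ) then ξ t k else 0 with hη
    -- continuity of the coefficient bound
    have hxcon : ContinuousOn x (Icc A B) := fun t ht =>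
      (hxC t (hIcc ht)).continuousWithinAt
    have hξkcon : ∀ k : Fin n, ContinuousOn (fun t => ξ t k) (Icc A B) := fun k t ht =>
      ((hξ t (hIcc ht) k).continuousAt).continuousWithinAt
    have hccon : ∀ j, ContinuousOn (fun t => cc j t) (Icc A B) := by
      intro j
      refine continuousOn_const.mul (continuousOn_finset_sum _ ?_)
      intro i _
      exact (((ha i j).continuous).comp_continuousOn hxcon).mul (hξkcon i)
    have hbcon : ∀ k j i, ContinuousOn (fun t => bb k j i t) (Icc A B) := by
      intro k j i
      simp only [hbb]
      split_ifs with h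
      · have hc1 : Continuous (fderiv ℝ (a i j)) :=
          ContDiff.continuous (𝕜 := ℝ) ((ha i j).fderiv_right (m := (⊤ : ℕ∞)) (by simp))
        exact (hc1.clm_apply continuous_const).comp_continuousOn hxcon
      · exact continuousOn_const
    set GG : ℝ → ℝ := fun t => ∑ k, ∑ j, |(-(cc j t))| * ∑ i, |bb k j i t| with hGG
    have hGGcon : ContinuousOn GG (Icc A B) := by
      refine continuousOn_finset_sum _ fun k _ => continuousOn_finset_sum _ fun j _ => ?_
      exact ((hccon j).neg.abs).mul (continuousOn_finset_sum _ fun i _ => (hbcon k j i).abs)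
    obtain ⟨C, hC⟩ := isCompact_Icc.exists_bound_of_continuousOn hGGcon
    set K := C.toNNReal with hK
    have hlip : ∀ t, LipschitzOnWith K (vA t) univ := by
      intro t
      rw [lipschitzOnWith_univ]
      refine LipschitzWith.of_dist_le_mul fun y y' => ?_
      have hKd : 0 ≤ (K:ℝ) * dist y y' := mul_nonneg K.2 dist_nonneg
      rw [dist_pi_le_iff hKd]
      intro k
      by_cases hk : n₂ ≤ (k : ℕ)
      · simp only [hvA, if_pos hk]
        rw [Real.dist_eq]
        refine (my_sum_est _ _ y y').trans ?_
        refine mul_le_mul_of_nonneg_right ?_ dist_nonneg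
        have h1 : (∑ j, |(-(cc j (cl t)))| * ∑ i, |bb k j i (cl t)|) ≤ GG (cl t) := by
          refine Finset.single_le_sum (f := fun k => ∑ j, |(-(cc j (cl t)))| * ∑ i, |bb k j i (cl t)|)
            (fun k _ => ?_) (Finset.mem_univ k)
          positivity
        refine h1.trans ?_
        calc GG (cl t) ≤ |GG (cl t)| := le_abs_self _
          _ ≤ C := by rw [← Real.norm_eq_abs]; exact hC _ (hclmem t)
          _ ≤ (K:ℝ) := by rw [hK, Real.coe_toNNReal']; exact le_max_left _ _
      · simp only [hvA, if_neg hk]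
        rw [dist_self]
        exact hKd
    have hfA : ∀ t ∈ Icc A B, HasDerivAt η (vA t (η t)) t := by
      intro t ht
      have htI := hIcc ht
      refine hasDerivAt_pi.mpr fun k => ?_
      by_cases hk : n₂ ≤ (k : ℕ)
      · have hcomp : (fun s => η s k) = fun s => ξ s k := by
          funext s; rw [hη]; simp only [if_pos hk]
        rw [hcomp]
        have hd := hξ t htI k
        convert hd using 1
        · rfl
        · rfl
        simp only [hvA, if_pos hk]
        rw [hcleq t ht]
        have hinner : ∀ j : Fin m, (∑ i, bb k j i t * η t i)
            = ∑ i, fderiv ℝ (a i j) (x t) (Pi.single k 1) * ξ t i := by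
          intro j
          refine Finset.sum_congr rfl fun i _ => ?_
          rcases lt_or_ge (i : ℕ) n₂ with hi | hi
          · rw [hdep i j k hi (le_trans h₁₂ hk) (x t)]
            simp [hbb, Nat.not_le.mpr hi]
          · simp [hbb, if_pos hi, hη, if_pos hi]
        calc (∑ j, (-(cc j t)) * ∑ i, bb k j i t * η t i)
            = ∑ j, -(cc j t * ∑ i, fderiv ℝ (a i j) (x t) (Pi.single k 1) * ξ t i) := by
              refine Finset.sum_congr rfl fun j _ => ?_
              rw [hinner j, neg_mul]
          _ = -(∑ j, 2 * (∑ i, a i j (x t) * ξ t i) *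
                (∑ i, fderiv ℝ (a i j) (x t) (Pi.single k 1) * ξ t i)) := by
              rw [← Finset.sum_neg_distrib]
      · have hcomp : (fun s => η s k) = fun _ => (0:ℝ) := by
          funext s; rw [hη]; simp only [if_neg hk]
        rw [hcomp]
        have hval : vA t (η t) k = 0 := by simp only [hvA, if_neg hk]
        rw [hval]
        exact hasDerivAt_const t 0
    have hgA : ∀ t ∈ Icc A B, HasDerivAt (fun _ : ℝ => (0 : Fin n → ℝ))
        (vA t ((fun _ : ℝ => (0 : Fin n → ℝ)) t)) t := by
      intro t _
      have hval : vA t (0 : Fin n → ℝ) = 0 := by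
        funext k
        simp only [hvA]
        split_ifs with hk
        · simp
        · rfl
      simp only
      rw [hval]
      exact hasDerivAt_const t 0
    have heqA : η 0 = (fun _ : ℝ => (0 : Fin n → ℝ)) 0 := by
      funext k
      rw [hη]
      simp only
      split_ifs with hk
      · exact hinit k hk
      · rfl
    have := myODE_unique hlip h0AB hfA (fun _ _ => mem_univ _) hgA (fun _ _ => mem_univ _)
      heqA ht1AB
    have hk := congrFun this k₀
    simpa only [hη, if_pos hk₀, Pi.zero_apply] using hk
  -- abbreviations for the reduction map
  set σp := lowProj n n₁ with hσp
  have hconstA : ∀ (i : Fin n) (j : Fin m), (i : ℕ) < n₂ → ∀ p, a i j (σp p) = a i j p :=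
    fun i j hi p => const_of_high (ha i j) (fun k hk q => hdep i j k hi hk q) p
  have hfdA : ∀ (i : Fin n) (j : Fin m), (i : ℕ) < n₂ → ∀ p (k : Fin n), (k : ℕ) < n₁ →
      fderiv ℝ (a i j) p (Pi.single k 1) = fderiv ℝ (a i j) (σp p) (Pi.single k 1) :=
    fun i j hi p k hk => fderiv_lowProj (ha i j) (fun k hk q => hdep i j k hi hk q) p k hk
  have hσtr : ∀ p : Fin n → ℝ,
      σp (fun k => if (k : ℕ) < n₂ then p k else 0) = σp p := by
    intro p
    funext l
    rw [hσp, lowProj_apply, lowProj_apply]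
    by_cases hl : (l : ℕ) < n₁
    · simp [hl, lt_of_lt_of_le hl h₁₂]
    · simp [hl]
  -- the autonomous reduced vector field
  set SS : Fin m → ((Fin n → ℝ) × (Fin n → ℝ)) → ℝ := fun j z =>
    ∑ i : Fin n, if (i : ℕ) < n₂ then a i j (σp z.1) * z.2 i else 0 with hSS
  set VV : ((Fin n → ℝ) × (Fin n → ℝ)) → ((Fin n → ℝ) × (Fin n → ℝ)) := fun z =>
    (fun k => if (k : ℕ) < n₂ then ∑ j : Fin m, 2 * SS j z * a k j (σp z.1) else 0,
     fun k => if (k : ℕ) < n₁ then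
        -(∑ j : Fin m, 2 * SS j z * ∑ i : Fin n, if (i : ℕ) < n₂ then
            fderiv ℝ (a i j) (σp z.1) (Pi.single k 1) * z.2 i else 0)
      else 0) with hVV
  have hVV1 : ∀ z (k : Fin n), (VV z).1 k
      = if (k : ℕ) < n₂ then ∑ j : Fin m, 2 * SS j z * a k j (σp z.1) else 0 := fun z k => rfl
  have hVV2 : ∀ z (k : Fin n), (VV z).2 k
      = if (k : ℕ) < n₁ then
          -(∑ j : Fin m, 2 * SS j z * ∑ i : Fin n, if (i : ℕ) < n₂ then
              fderiv ℝ (a i j) (σp z.1) (Pi.single k 1) * z.2 i else 0)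
        else 0 := fun z k => rfl
  -- smoothness of the vector field
  have hfst : ContDiff ℝ (⊤ : ℕ∞) (fun z : (Fin n → ℝ) × (Fin n → ℝ) => σp z.1) :=
    σp.contDiff.comp contDiff_fst
  have hsndi : ∀ i : Fin n, ContDiff ℝ (⊤ : ℕ∞) (fun z : (Fin n → ℝ) × (Fin n → ℝ) => z.2 i) :=
    fun i => ((ContinuousLinearMap.proj (R := ℝ) (φ := fun _ : Fin n => ℝ) i).contDiff).comp
      contDiff_snd
  have hSSc : ∀ j, ContDiff ℝ (⊤ : ℕ∞) (SS j) := by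
    intro j
    rw [hSS]
    refine ContDiff.sum fun i _ => ?_
    by_cases hi : (i : ℕ) < n₂
    · simp only [if_pos hi]
      exact ((ha i j).comp hfst).mul (hsndi i)
    · simp only [if_neg hi]
      exact contDiff_const
  have hVVc : ContDiff ℝ (⊤ : ℕ∞) VV := by
    rw [hVV]
    refine ContDiff.prodMk ?_ ?_
    · refine contDiff_pi.mpr fun k => ?_
      by_cases hk : (k : ℕ) < n₂
      · simp only [if_pos hk]
        refine ContDiff.sum fun j _ => ?_
        exact (contDiff_const.mul (hSSc j)).mul ((ha k j).comp hfst)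
      · simp only [if_neg hk]
        exact contDiff_const
    · refine contDiff_pi.mpr fun k => ?_
      by_cases hk : (k : ℕ) < n₁
      · simp only [if_pos hk]
        refine ContDiff.neg (ContDiff.sum fun j _ => ?_)
        refine (contDiff_const.mul (hSSc j)).mul (ContDiff.sum fun i _ => ?_)
        by_cases hi : (i : ℕ) < n₂
        · simp only [if_pos hi]
          have hfd : ContDiff ℝ (⊤ : ℕ∞) (fun p : Fin n → ℝ => fderiv ℝ (a i j) p) :=
            (ha i j).fderiv_right (m := (⊤ : ℕ∞)) (by simp)
          exact (ContDiff.clm_apply (hfd.comp hfst) contDiff_const).mul (hsndi i)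
        · simp only [if_neg hi]
          exact contDiff_const
      · simp only [if_neg hk]
        exact contDiff_const
  -- the main argument
  intro t₁ ht₁ i₀ hi₀
  set A := min 0 t₁ with hA
  set B := max 0 t₁ with hB
  have hAI : A ∈ I := by
    rcases le_total 0 t₁ with h | h
    · rwa [hA, min_eq_left h]
    · rwa [hA, min_eq_right h]
  have hBI : B ∈ I := by
    rcases le_total 0 t₁ with h | h
    · rwa [hB, max_eq_right h]
    · rwa [hB, max_eq_left h]
  have hIcc : Icc A B ⊆ I := hI.out hAI hBI
  have h0AB : (0:ℝ) ∈ Icc A B := ⟨min_le_left _ _, le_max_left _ _⟩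
  have ht1AB : t₁ ∈ Icc A B := ⟨min_le_right _ _, le_max_right _ _⟩
  set F : ℝ → (Fin n → ℝ) × (Fin n → ℝ) :=
    fun t => (fun k => if (k : ℕ) < n₂ then x t k else 0, ξ t) with hF
  set G : ℝ → (Fin n → ℝ) × (Fin n → ℝ) :=
    fun t => (fun k => if (k : ℕ) < n₂ then xr t k else 0, ξr t) with hG
  have hF1 : ∀ t (k : Fin n), (F t).1 k = if (k : ℕ) < n₂ then x t k else 0 := fun _ _ => rfl
  have hF2 : ∀ t, (F t).2 = ξ t := fun _ => rfl
  have hG1 : ∀ t (k : Fin n), (G t).1 k = if (k : ℕ) < n₂ then xr t k else 0 := fun _ _ => rfl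
  have hG2 : ∀ t, (G t).2 = ξr t := fun _ => rfl
  -- derivative of F
  have hFd : ∀ t ∈ Icc A B, HasDerivAt F (VV (F t)) t := by
    intro t ht
    have htI := hIcc ht
    have hσx : σp (F t).1 = σp (x t) := hσtr (x t)
    have hS1 : ∀ j, SS j (F t) = ∑ i : Fin n, a i j (x t) * ξ t i := by
      intro j
      rw [hSS]
      simp only
      rw [hσx]
      refine Finset.sum_congr rfl fun i _ => ?_
      rcases lt_or_ge (i : ℕ) n₂ with hi | hi
      · rw [if_pos hi, hconstA i j hi (x t)]
      · rw [if_neg (Nat.not_lt.mpr hi), hhigh t htI i hi, mul_zero]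
    refine HasDerivAt.prodMk ?_ ?_
    · refine hasDerivAt_pi.mpr fun k => ?_
      by_cases hk : (k : ℕ) < n₂
      · simp only [if_pos hk]
        convert hx t htI k using 1
        · rfl
        · rfl
        rw [hσtr (x t)]
        refine Finset.sum_congr rfl fun j _ => ?_
        rw [hS1 j, hconstA k j hk (x t)]
      · simp only [if_neg hk]
        exact hasDerivAt_const t 0
    · refine hasDerivAt_pi.mpr fun k => ?_
      convert hξ t htI k using 1
      · rfl
      · rfl
      by_cases hk : (k : ℕ) < n₁
      · rw [if_pos hk, hσx]
        refine congrArg Neg.neg (Finset.sum_congr rfl fun j _ => ?_)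
        rw [hS1 j]
        congr 1
        refine Finset.sum_congr rfl fun i _ => ?_
        rcases lt_or_ge (i : ℕ) n₂ with hi | hi
        · rw [if_pos hi, hF2, ← hfdA i j hi (x t) k hk]
        · rw [if_neg (Nat.not_lt.mpr hi), hhigh t htI i hi, mul_zero]
      · rw [if_neg hk]
        have hzero : ∀ j : Fin m,
            (∑ i : Fin n, fderiv ℝ (a i j) (x t) (Pi.single k 1) * ξ t i) = 0 := by
          intro j
          refine Finset.sum_eq_zero fun i _ => ?_
          rcases lt_or_ge (i : ℕ) n₂ with hi | hi
          · rw [hdep i j k hi (le_of_not_gt hk) (x t), zero_mul]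
          · rw [hhigh t htI i hi, mul_zero]
        simp only [hzero, mul_zero, Finset.sum_const_zero, neg_zero]
  -- derivative of G
  have hGd : ∀ t ∈ Icc A B, HasDerivAt G (VV (G t)) t := by
    intro t ht
    have htI := hIcc ht
    have hσxr : σp (G t).1 = σp (xr t) := hσtr (xr t)
    have hS1r : ∀ j, SS j (G t)
        = ∑ i : Fin n, if (i : ℕ) < n₂ then a i j (xr t) * ξr t i else 0 := by
      intro j
      rw [hSS]
      simp only
      rw [hσxr]
      refine Finset.sum_congr rfl fun i _ => ?_
      rcases lt_or_ge (i : ℕ) n₂ with hi | hi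
      · rw [if_pos hi, if_pos hi, hconstA i j hi (xr t)]
      · rw [if_neg (Nat.not_lt.mpr hi), if_neg (Nat.not_lt.mpr hi)]
    refine HasDerivAt.prodMk ?_ ?_
    · refine hasDerivAt_pi.mpr fun k => ?_
      by_cases hk : (k : ℕ) < n₂
      · simp only [if_pos hk]
        convert hxr t htI k using 1
        · rfl
        · rfl
        rw [hσtr (xr t)]
        refine Finset.sum_congr rfl fun j _ => ?_
        rw [hS1r j, hconstA k j hk (xr t), if_pos hk]
      · simp only [if_neg hk]
        exact hasDerivAt_const t 0
    · refine hasDerivAt_pi.mpr fun k => ?_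
      convert hξr t htI k using 1
      · rfl
      · rfl
      by_cases hk : (k : ℕ) < n₁
      · rw [if_pos hk, hσxr]
        refine congrArg Neg.neg (Finset.sum_congr rfl fun j _ => ?_)
        rw [hS1r j]
        congr 1
        refine Finset.sum_congr rfl fun i _ => ?_
        rcases lt_or_ge (i : ℕ) n₂ with hi | hi
        · rw [if_pos hi, if_pos hi, hG2, ← hfdA i j hi (xr t) k hk]
        · rw [if_neg (Nat.not_lt.mpr hi), if_neg (Nat.not_lt.mpr hi)]
      · rw [if_neg hk]
        have hzero : ∀ j : Fin m, (∑ i : Fin n, if (i : ℕ) < n₂ then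
            fderiv ℝ (a i j) (xr t) (Pi.single k 1) * ξr t i else 0) = 0 := by
          intro j
          refine Finset.sum_eq_zero fun i _ => ?_
          rcases lt_or_ge (i : ℕ) n₂ with hi | hi
          · rw [if_pos hi, hdep i j k hi (le_of_not_gt hk) (xr t), zero_mul]
          · rw [if_neg (Nat.not_lt.mpr hi)]
        simp only [hzero, mul_zero, Finset.sum_const_zero, neg_zero]
  -- trajectories are bounded, the vector field is Lipschitz on a big ball
  have hFc : ContinuousOn F (Icc A B) := fun t ht => ((hFd t ht).continuousAt).continuousWithinAt
  have hGc : ContinuousOn G (Icc A B) := fun t ht => ((hGd t ht).continuousAt).continuousWithinAt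
  obtain ⟨C₁, hC₁⟩ := isCompact_Icc.exists_bound_of_continuousOn hFc
  obtain ⟨C₂, hC₂⟩ := isCompact_Icc.exists_bound_of_continuousOn hGc
  set R := max C₁ C₂ with hR
  have hFmem : ∀ t ∈ Icc A B, F t ∈ closedBall (0 : (Fin n → ℝ) × (Fin n → ℝ)) R := by
    intro t ht
    rw [mem_closedBall_zero_iff]
    exact (hC₁ t ht).trans (le_max_left _ _)
  have hGmem : ∀ t ∈ Icc A B, G t ∈ closedBall (0 : (Fin n → ℝ) × (Fin n → ℝ)) R := by
    intro t ht
    rw [mem_closedBall_zero_iff]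
    exact (hC₂ t ht).trans (le_max_right _ _)
  have hVd : Differentiable ℝ VV := hVVc.differentiable (by simp)
  have hfdVc : Continuous (fderiv ℝ VV) := hVVc.continuous_fderiv (by simp)
  obtain ⟨C₃, hC₃⟩ :=
    (isCompact_closedBall (0 : (Fin n → ℝ) × (Fin n → ℝ)) R).exists_bound_of_continuousOn
      hfdVc.continuousOn
  have hlipB : LipschitzOnWith C₃.toNNReal VV (closedBall (0 : (Fin n → ℝ) × (Fin n → ℝ)) R) :=
    Convex.lipschitzOnWith_of_nnnorm_fderiv_le (fun z _ => hVd z)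
      (fun z hz => by rw [← norm_toNNReal]; exact Real.toNNReal_mono (hC₃ z hz))
      (convex_closedBall _ _)
  have heqB : F 0 = G 0 := by
    simp only [hF, hG]
    rw [hx0, hξ0]
  have hsol := myODE_unique (v := fun _ z => VV z)
    (s := fun _ => closedBall (0 : (Fin n → ℝ) × (Fin n → ℝ)) R) (K := C₃.toNNReal)
    (fun _ => hlipB) h0AB hFd hFmem hGd hGmem heqB
  have hFG := hsol ht1AB
  constructor
  · have h1 := congrFun (congrArg Prod.fst hFG) i₀
    rw [hF1, hG1, if_pos hi₀, if_pos hi₀] at h1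
    exact h1
  · have h2 := congrFun (congrArg Prod.snd hFG) i₀
    rw [hF2, hG2] at h2
    exact h2
end

section
/- Let d,m≥1, let F:ℝ^d→ℝ^{d×m} be a matrix-valued map whose entries are affine functions of x, let G∈ℝ^{m×m} be antisymmetric and invertible, let u₀∈ℝ^m, and let T₀>0. Then there exist C>0 and ε₀>0 such that for every ε∈(0,ε₀), the solution x of the ordinary differential equation ẋ(t)=F(x(t))·e^{(t/ε)G}u₀ with x(0)=0 exists on [0,T₀] and satisfies ‖x(t)‖≤Cε for every t∈[0,T₀]. -/
/-!
The control `u s = exp ((s / ε) • G) *ᵥ u₀` stays bounded because `exp ((s / ε) • G)` is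
orthogonal, and it has the primitive `w = ε • G⁻¹ *ᵥ u` of size `O(ε)`. Write
`F y *ᵥ v = A y v + B v` with `A` linear. The field is Lipschitz in `y` uniformly in `ε`, so by
Gronwall the solution and its velocity are bounded independently of `ε` on `[0, T₀]` (global
existence follows from Picard–Lindelöf after truncating the field outside the Gronwall ball).
Integrating by parts, `x t = P t - P 0 - ∫₀ᵗ A (x' s) (w s) ds` with `P = A x w + B w`, and every
term is `O(ε)`.
-/

open Set NNReal Matrix

section RadialRetraction

variable {E : Type*} [NormedAddCommGroup E] [NormedSpace ℝ E]

noncomputable def radialRetraction (R : ℝ) (y : E) : E := (R / max R ‖y‖) • y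

variable {R : ℝ}

theorem radialRetraction_of_norm_le {y : E} (hy : ‖y‖ ≤ R) (hR : 0 < R) :
    radialRetraction R y = y := by
  rw [radialRetraction, max_eq_left hy, div_self hR.ne', one_smul]

theorem norm_radialRetraction_le_radius (hR : 0 ≤ R) (y : E) : ‖radialRetraction R y‖ ≤ R := by
  rw [radialRetraction, norm_smul, Real.norm_of_nonneg (by positivity), div_mul_eq_mul_div]
  exact div_le_of_le_mul₀ (le_max_of_le_left hR) hR
    (mul_le_mul_of_nonneg_left (le_max_right _ _) hR)

theorem norm_radialRetraction_le (hR : 0 ≤ R) (y : E) : ‖radialRetraction R y‖ ≤ ‖y‖ := by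
  rw [radialRetraction, norm_smul, Real.norm_of_nonneg (by positivity)]
  exact mul_le_of_le_one_left (norm_nonneg y)
    (div_le_one_of_le₀ (le_max_left _ _) (le_max_of_le_left hR))

/-- Writing `λ y = R / max R ‖y‖`, the difference `λ x • x - λ y • y` splits as
`λ x • (x - y) + (λ x - λ y) • y`, and each term has norm at most `‖x - y‖`. -/
theorem lipschitzWith_radialRetraction (hR : 0 < R) :
    LipschitzWith 2 (radialRetraction (E := E) R) := by
  refine LipschitzWith.of_dist_le_mul fun x y => ?_
  set Mx := max R ‖x‖
  set My := max R ‖y‖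
  have hMx : 0 < Mx := lt_max_of_lt_left hR
  have hMy : 0 < My := lt_max_of_lt_left hR
  have hsplit : radialRetraction R x - radialRetraction R y =
      (R / Mx) • (x - y) + (R / Mx - R / My) • y := by
    simp only [radialRetraction, smul_sub, sub_smul]; abel
  have h1 : ‖(R / Mx) • (x - y)‖ ≤ ‖x - y‖ := by
    rw [norm_smul, Real.norm_of_nonneg (by positivity)]
    exact mul_le_of_le_one_left (norm_nonneg _) ((div_le_one hMx).2 (le_max_left _ _))
  have h2 : ‖(R / Mx - R / My) • y‖ ≤ ‖x - y‖ := by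
    have hdiff : |My - Mx| ≤ ‖x - y‖ := by
      have h := abs_max_sub_max_le_abs ‖y‖ ‖x‖ R
      rw [max_comm ‖y‖, max_comm ‖x‖, abs_sub_comm ‖y‖] at h
      exact h.trans (abs_norm_sub_norm_le x y)
    have hcoef : R / Mx - R / My = R * (My - Mx) / (Mx * My) := by
      field_simp
    rw [norm_smul, Real.norm_eq_abs, hcoef, abs_div, abs_mul, abs_of_pos hR,
      abs_of_pos (mul_pos hMx hMy), div_mul_eq_mul_div, div_le_iff₀ (mul_pos hMx hMy)]
    calc R * |My - Mx| * ‖y‖ ≤ Mx * ‖x - y‖ * My := by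
          gcongr
          · exact le_max_left _ _
          · exact le_max_right _ _
      _ = ‖x - y‖ * (Mx * My) := by ring
  rw [dist_eq_norm, dist_eq_norm, hsplit, NNReal.coe_ofNat, two_mul]
  exact (norm_add_le _ _).trans (add_le_add h1 h2)

end RadialRetraction

theorem LipschitzWith.norm_le_mul_add {E F : Type*} [SeminormedAddCommGroup E]
    [SeminormedAddCommGroup F] {f : E → F} {K : ℝ≥0} (hf : LipschitzWith K f) (y : E) :
    ‖f y‖ ≤ K * ‖y‖ + ‖f 0‖ := by
  have h := hf.norm_sub_le y 0
  rw [sub_zero] at h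
  linarith [norm_sub_norm_le (f y) (f 0)]

section GlobalExistence

variable {E : Type*} [NormedAddCommGroup E] [NormedSpace ℝ E] [CompleteSpace E]

theorem exists_hasDerivAt_of_lipschitzWith_of_norm_le {g : ℝ → E → E} {K L : ℝ≥0} {T : ℝ}
    (hT : 0 ≤ T) (hcont : ∀ y, Continuous (g · y)) (hlip : ∀ t, LipschitzWith K (g t))
    (hbound : ∀ t y, ‖g t y‖ ≤ L) :
    ∃ x : ℝ → E, x 0 = 0 ∧ ∀ t ∈ Icc 0 T, HasDerivAt x (g t (x t)) t := by
  have hpl : IsPicardLindelof g (tmin := -1) (tmax := T + 1)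
      ⟨0, by constructor <;> linarith⟩ 0 (L * (T + 1).toNNReal) 0 L K :=
    { lipschitzOnWith := fun t _ => (hlip t).lipschitzOnWith
      continuousOn := fun y _ => (hcont y).continuousOn
      norm_le := fun t _ y _ => hbound t y
      mul_max_le := by
        rw [NNReal.coe_mul, Real.coe_toNNReal _ (by linarith), max_eq_left (by linarith)]
        simp }
  obtain ⟨x, hx0, hx⟩ := hpl.exists_eq_forall_mem_Icc_hasDerivWithinAt₀
  exact ⟨x, hx0, fun t ht => (hx t ⟨by linarith [ht.1], by linarith [ht.2]⟩).hasDerivAt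
    (Icc_mem_nhds (by linarith [ht.1]) (by linarith [ht.2]))⟩

/-- Solutions of the field truncated outside a ball of radius larger than the Gronwall bound
never leave that ball, so they solve the original equation. -/
theorem exists_hasDerivAt_norm_le_gronwallBound {f : ℝ → E → E} {K : ℝ≥0} {c T : ℝ}
    (hT : 0 ≤ T) (hcont : ∀ y, Continuous (f · y)) (hlip : ∀ t, LipschitzWith K (f t))
    (hf0 : ∀ t, ‖f t 0‖ ≤ c) :
    ∃ x : ℝ → E, x 0 = 0 ∧ ∀ t ∈ Icc 0 T,
      HasDerivAt x (f t (x t)) t ∧ ‖x t‖ ≤ gronwallBound 0 K c T := by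
  have hgrowth : ∀ t y, ‖f t y‖ ≤ K * ‖y‖ + c := fun t y =>
    ((hlip t).norm_le_mul_add y).trans (by gcongr; exact hf0 t)
  have hc : 0 ≤ c := (norm_nonneg _).trans (hf0 0)
  set R := gronwallBound 0 K c T + 1
  have hR : 0 < R := by
    have := gronwallBound_mono le_rfl hc K.2 hT
    rw [gronwallBound_x0] at this
    positivity
  obtain ⟨x, hx0, hx⟩ := exists_hasDerivAt_of_lipschitzWith_of_norm_le
    (g := fun t y => f t (radialRetraction R y)) (K := K * 2) (L := ⟨K * R + c, by positivity⟩)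
    hT (fun y => hcont _) (fun t => (hlip t).comp (lipschitzWith_radialRetraction hR))
    (fun t y => (hgrowth t _).trans <| add_le_add_left
      (mul_le_mul_of_nonneg_left (norm_radialRetraction_le_radius hR.le y) K.2) c)
  have hxR : ∀ t ∈ Icc 0 T, ‖x t‖ ≤ gronwallBound 0 K c T := by
    intro t ht
    have hgronwall := norm_le_gronwallBound_of_norm_deriv_right_le (δ := 0) (K := K) (ε := c)
      (fun s hs => (hx s hs).continuousAt.continuousWithinAt)
      (fun s hs => (hx s (Ico_subset_Icc_self hs)).hasDerivWithinAt) (by simp [hx0])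
      (fun s _ => (hgrowth _ _).trans <| add_le_add_left
        (mul_le_mul_of_nonneg_left (norm_radialRetraction_le hR.le _) K.2) c) t ht
    rw [sub_zero] at hgronwall
    exact hgronwall.trans (gronwallBound_mono le_rfl hc K.2 ht.2)
  refine ⟨x, hx0, fun t ht => ⟨?_, hxR t ht⟩⟩
  convert hx t ht using 2
  exact (radialRetraction_of_norm_le ((hxR t ht).trans (le_add_of_nonneg_right zero_le_one))
    hR).symm

end GlobalExistence

section Averaging

variable {E V : Type*} [NormedAddCommGroup E] [NormedSpace ℝ E] [NormedAddCommGroup V]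
  [NormedSpace ℝ V]

theorem norm_apply_apply_add_apply_le {F : Type*} [NormedAddCommGroup F] [NormedSpace ℝ F]
    (A : E →L[ℝ] V →L[ℝ] F) (B : V →L[ℝ] F) {y : E} {v : V} {R r : ℝ}
    (hy : ‖y‖ ≤ R) (hv : ‖v‖ ≤ r) : ‖A y v + B v‖ ≤ (‖A‖ * R + ‖B‖) * r := by
  have hR : 0 ≤ R := (norm_nonneg y).trans hy
  calc ‖A y v + B v‖ ≤ ‖A‖ * ‖y‖ * ‖v‖ + ‖B‖ * ‖v‖ :=
        (norm_add_le _ _).trans (add_le_add (A.le_opNorm₂ y v) (B.le_opNorm v))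
    _ = (‖A‖ * ‖y‖ + ‖B‖) * ‖v‖ := by ring
    _ ≤ (‖A‖ * R + ‖B‖) * r := by gcongr

/-- With `P s = A (x s) (w s) + B (w s)`, the derivative of `x - P` is `-A (x' s) (w s)`. -/
theorem norm_le_of_hasDerivAt_of_hasDerivAt_primitive
    (A : E →L[ℝ] V →L[ℝ] E) (B : V →L[ℝ] E) {u w : ℝ → V} {x : ℝ → E} {T R U δ : ℝ}
    (hw : ∀ s, HasDerivAt w (u s) s) (hwδ : ∀ s, ‖w s‖ ≤ δ) (huU : ∀ s, ‖u s‖ ≤ U)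
    (hx0 : x 0 = 0) (hx : ∀ s ∈ Icc 0 T, HasDerivAt x (A (x s) (u s) + B (u s)) s)
    (hxR : ∀ s ∈ Icc 0 T, ‖x s‖ ≤ R) {t : ℝ} (ht : t ∈ Icc 0 T) :
    ‖x t‖ ≤ (2 * (‖A‖ * R + ‖B‖) + T * (‖A‖ * ((‖A‖ * R + ‖B‖) * U))) * δ := by
  set D := ‖A‖ * R + ‖B‖
  set P : ℝ → E := fun s => A (x s) (w s) + B (w s)
  have hP : ∀ s ∈ Icc 0 T, ‖P s‖ ≤ D * δ := fun s hs =>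
    norm_apply_apply_add_apply_le A B (hxR s hs) (hwδ s)
  have hdiff : ∀ s ∈ Icc 0 T,
      HasDerivAt (fun s => x s - P s) (-A (A (x s) (u s) + B (u s)) (w s)) s := by
    intro s hs
    have hP' := ((A.hasFDerivAt.comp_hasDerivAt s (hx s hs)).clm_apply (hw s)).add
      (B.hasFDerivAt.comp_hasDerivAt s (hw s))
    convert (hx s hs).sub hP' using 1
    · rfl
    · simp only [Function.comp_apply]
      abel
  have hdiff_le : ∀ s ∈ Icc 0 T, ‖-A (A (x s) (u s) + B (u s)) (w s)‖ ≤ ‖A‖ * (D * U) * δ := by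
    intro s hs
    rw [norm_neg]
    have hderiv := norm_apply_apply_add_apply_le A B (hxR s hs) (huU s)
    have hDU : 0 ≤ D * U := (norm_nonneg _).trans hderiv
    refine (A.le_opNorm₂ _ _).trans ?_
    gcongr
    exact hwδ s
  have hmvt := norm_image_sub_le_of_norm_deriv_le_segment'
    (fun s hs => (hdiff s hs).hasDerivWithinAt) (fun s hs => hdiff_le s (Ico_subset_Icc_self hs))
    t ht
  have h0 : (0 : ℝ) ∈ Icc 0 T := ⟨le_rfl, ht.1.trans ht.2⟩
  have hM : 0 ≤ ‖A‖ * (D * U) * δ := (norm_nonneg _).trans (hdiff_le 0 h0)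
  calc ‖x t‖ = ‖((x t - P t) - (x 0 - P 0)) + P t - P 0‖ := by congr 1; rw [hx0]; abel
    _ ≤ ‖(x t - P t) - (x 0 - P 0)‖ + ‖P t‖ + ‖P 0‖ :=
        (norm_sub_le _ _).trans (add_le_add_left (norm_add_le _ _) _)
    _ ≤ ‖A‖ * (D * U) * δ * T + D * δ + D * δ := by
        gcongr
        · exact hmvt.trans (by rw [sub_zero]; exact mul_le_mul_of_nonneg_left ht.2 hM)
        · exact hP t ht
        · exact hP 0 h0
    _ = (2 * D + T * (‖A‖ * (D * U))) * δ := by ring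

theorem exists_forall_exists_hasDerivAt_norm_le_mul [CompleteSpace E]
    (A : E →L[ℝ] V →L[ℝ] E) (B : V →L[ℝ] E) {T U : ℝ} (hT : 0 ≤ T) (hU : 0 ≤ U) :
    ∃ C ≥ 0, ∀ (u w : ℝ → V) (δ : ℝ), Continuous u → (∀ s, ‖u s‖ ≤ U) →
      (∀ s, HasDerivAt w (u s) s) → (∀ s, ‖w s‖ ≤ δ) →
      ∃ x : ℝ → E, x 0 = 0 ∧
        ∀ t ∈ Icc 0 T, HasDerivAt x (A (x t) (u t) + B (u t)) t ∧ ‖x t‖ ≤ C * δ := by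
  set R := gronwallBound 0 (‖A‖ * U) (‖B‖ * U) T
  have hR : 0 ≤ R := by
    have := gronwallBound_mono (δ := 0) (K := ‖A‖ * U) (ε := ‖B‖ * U) le_rfl (by positivity)
      (by positivity) hT
    rwa [gronwallBound_x0] at this
  refine ⟨2 * (‖A‖ * R + ‖B‖) + T * (‖A‖ * ((‖A‖ * R + ‖B‖) * U)), by positivity,
    fun u w δ hu huU hw hwδ => ?_⟩
  have hlip : ∀ s, LipschitzWith ⟨‖A‖ * U, by positivity⟩ fun y => A y (u s) + B (u s) :=
    fun s => LipschitzWith.of_dist_le_mul fun y z => by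
      have h := (A.le_opNorm₂ (y - z) (u s)).trans
        (mul_le_mul_of_nonneg_left (huU s) (by positivity))
      rw [map_sub, mul_right_comm] at h
      rwa [dist_eq_norm, dist_eq_norm, add_sub_add_right_eq_sub]
  obtain ⟨x, hx0, hx⟩ := exists_hasDerivAt_norm_le_gronwallBound
    (f := fun s y => A y (u s) + B (u s)) (c := ‖B‖ * U) hT
    (fun y => ((A y).continuous.comp hu).add (B.continuous.comp hu)) hlip
    (fun s => by
      simpa using (B.le_opNorm (u s)).trans (mul_le_mul_of_nonneg_left (huU s) (norm_nonneg B)))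
  exact ⟨x, hx0, fun t ht => ⟨(hx t ht).1, norm_le_of_hasDerivAt_of_hasDerivAt_primitive A B hw
    hwδ huU hx0 (fun s hs => (hx s hs).1) (fun s hs => (hx s hs).2) ht⟩⟩

end Averaging

theorem exists_continuousLinearMap_mulVec_eq_of_affine {X ι κ : Type*} [NormedAddCommGroup X]
    [NormedSpace ℝ X] [FiniteDimensional ℝ X] [Fintype ι] [Fintype κ] [DecidableEq κ]
    {F : X → Matrix ι κ ℝ} (hF : ∀ i j, ∃ (L : X →ₗ[ℝ] ℝ) (c : ℝ), ∀ x, F x i j = L x + c) :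
    ∃ (A : X →L[ℝ] (κ → ℝ) →L[ℝ] (ι → ℝ)) (B : (κ → ℝ) →L[ℝ] (ι → ℝ)),
      ∀ y v, F y *ᵥ v = A y v + B v := by
  choose L c hLc using hF
  let Λ : X →ₗ[ℝ] Matrix ι κ ℝ := LinearMap.pi fun i => LinearMap.pi fun j => L i j
  have hΛ : ∀ y, F y = Λ y + Matrix.of c := fun y => by
    ext i j
    simp only [hLc, Matrix.add_apply, Matrix.of_apply]
    rfl
  refine ⟨LinearMap.toContinuousLinearMap
      (LinearMap.toContinuousLinearMap.toLinearMap ∘ₗ toLin'.toLinearMap ∘ₗ Λ),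
    LinearMap.toContinuousLinearMap (toLin' (Matrix.of c)), fun y v => ?_⟩
  simp [hΛ, add_mulVec]

theorem Matrix.dotProduct_self_exp_smul_mulVec {n : Type*} [Fintype n] [DecidableEq n]
    {A : Matrix n n ℝ} (hA : Aᵀ = -A) (t : ℝ) (v : n → ℝ) :
    (NormedSpace.exp (t • A) *ᵥ v) ⬝ᵥ (NormedSpace.exp (t • A) *ᵥ v) = v ⬝ᵥ v := by
  have horth : (NormedSpace.exp (t • A))ᵀ * NormedSpace.exp (t • A) = 1 := by
    rw [← exp_transpose, transpose_smul, hA, smul_neg,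
      ← exp_add_of_commute _ _ (Commute.refl (t • A)).neg_left, neg_add_cancel,
      NormedSpace.exp_zero]
  rw [dotProduct_mulVec, vecMul_mulVec, ← mulVec_transpose,
    transpose_mul, transpose_transpose, horth, one_mulVec]

theorem norm_le_sqrt_dotProduct_self {n : Type*} [Fintype n] (v : n → ℝ) : ‖v‖ ≤ √(v ⬝ᵥ v) := by
  refine (pi_norm_le_iff_of_nonneg (Real.sqrt_nonneg _)).2 fun i => ?_
  rw [Real.norm_eq_abs, ← Real.sqrt_sq_eq_abs]
  refine Real.sqrt_le_sqrt ?_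
  rw [dotProduct, sq]
  exact Finset.single_le_sum (f := fun j => v j * v j) (fun j _ => mul_self_nonneg (v j))
    (Finset.mem_univ i)

theorem sqrt_sum_sq_le_sqrt_card_mul_norm {n : Type*} [Fintype n] (v : n → ℝ) :
    √(∑ i, v i ^ 2) ≤ √(Fintype.card n) * ‖v‖ := by
  rw [← Real.sqrt_sq (norm_nonneg v), ← Real.sqrt_mul (Nat.cast_nonneg _)]
  refine Real.sqrt_le_sqrt ?_
  calc ∑ i, v i ^ 2 ≤ ∑ _i : n, ‖v‖ ^ 2 := Finset.sum_le_sum fun i _ => by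
        rw [← sq_abs, ← Real.norm_eq_abs]; gcongr; exact norm_le_pi_norm v i
    _ = Fintype.card n * ‖v‖ ^ 2 := by simp

section RotatingControl

variable {n : Type*} [Fintype n] [DecidableEq n]

theorem Matrix.hasDerivAt_exp_smul_mulVec (A : Matrix n n ℝ) (v : n → ℝ) (t : ℝ) :
    HasDerivAt (fun s : ℝ => NormedSpace.exp (s • A) *ᵥ v)
      (A *ᵥ (NormedSpace.exp (t • A) *ᵥ v)) t := by
  let _ : NormedRing (Matrix n n ℝ) := Matrix.linftyOpNormedRing
  let _ : NormedAlgebra ℝ (Matrix n n ℝ) := Matrix.linftyOpNormedAlgebra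
  let L : Matrix n n ℝ →L[ℝ] (n → ℝ) := LinearMap.toContinuousLinearMap
    ((LinearMap.applyₗ v).comp toLin'.toLinearMap)
  rw [mulVec_mulVec]
  exact L.hasFDerivAt.comp_hasDerivAt t (hasDerivAt_exp_smul_const' A t)

theorem Matrix.continuous_exp_smul_mulVec (A : Matrix n n ℝ) (v : n → ℝ) :
    Continuous fun s : ℝ => NormedSpace.exp (s • A) *ᵥ v :=
  continuous_iff_continuousAt.2 fun t => (hasDerivAt_exp_smul_mulVec A v t).continuousAt

theorem Matrix.hasDerivAt_inv_mulVec_exp_smul_mulVec {A : Matrix n n ℝ} (hA : IsUnit A)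
    (v : n → ℝ) (t : ℝ) :
    HasDerivAt (fun s : ℝ => A⁻¹ *ᵥ (NormedSpace.exp (s • A) *ᵥ v))
      (NormedSpace.exp (t • A) *ᵥ v) t := by
  have h := (toLin' A⁻¹).toContinuousLinearMap.hasFDerivAt.comp_hasDerivAt t
    (hasDerivAt_exp_smul_mulVec A v t)
  refine h.congr_deriv ?_
  rw [LinearMap.coe_toContinuousLinearMap', toLin'_apply, mulVec_mulVec,
    nonsing_inv_mul _ ((isUnit_iff_isUnit_det A).1 hA), one_mulVec]

theorem Matrix.norm_exp_smul_mulVec_le {A : Matrix n n ℝ} (hA : Aᵀ = -A) (t : ℝ) (v : n → ℝ) :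
    ‖NormedSpace.exp (t • A) *ᵥ v‖ ≤ √(v ⬝ᵥ v) :=
  (norm_le_sqrt_dotProduct_self _).trans_eq (by rw [dotProduct_self_exp_smul_mulVec hA])

/-- The primitive is `ε • G⁻¹ *ᵥ exp ((s / ε) • G) *ᵥ v`. -/
theorem Matrix.exists_primitive_exp_smul_div_mulVec {G : Matrix n n ℝ} (hG : Gᵀ = -G)
    (hGinv : IsUnit G) (v : n → ℝ) :
    ∃ W ≥ 0, ∀ ε > 0, ∃ w : ℝ → n → ℝ,
      ∀ s, HasDerivAt w (NormedSpace.exp ((s / ε) • G) *ᵥ v) s ∧ ‖w s‖ ≤ W * ε := by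
  set Ginv := (toLin' G⁻¹).toContinuousLinearMap
  refine ⟨‖Ginv‖ * √(v ⬝ᵥ v), by positivity, fun ε hε =>
    ⟨fun s => ε • (G⁻¹ *ᵥ (NormedSpace.exp ((s / ε) • G) *ᵥ v)), fun s => ⟨?_, ?_⟩⟩⟩
  · have h := ((hasDerivAt_inv_mulVec_exp_smul_mulVec hGinv v (s / ε)).scomp s
      ((hasDerivAt_id s).div_const ε)).const_smul ε
    rwa [smul_smul, mul_one_div_cancel hε.ne', one_smul] at h
  · rw [norm_smul, Real.norm_of_nonneg hε.le, mul_comm]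
    gcongr
    exact (Ginv.le_opNorm _).trans (by gcongr; exact norm_exp_smul_mulVec_le hG _ v)

end RotatingControl

theorem stmt_7_general (d m : ℕ)
    (F : (Fin d → ℝ) → Matrix (Fin d) (Fin m) ℝ)
    (hF : ∀ i j, ∃ (L : (Fin d → ℝ) →ₗ[ℝ] ℝ) (c : ℝ), ∀ x, F x i j = L x + c)
    (G : Matrix (Fin m) (Fin m) ℝ) (hGanti : Gᵀ = -G) (hGinv : IsUnit G)
    (u₀ : Fin m → ℝ) (T₀ : ℝ) (hT₀ : 0 < T₀) :
    ∃ C > (0 : ℝ), ∃ ε₀ > (0 : ℝ), ∀ ε : ℝ, 0 < ε → ε < ε₀ →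
      ∃ x : ℝ → Fin d → ℝ, x 0 = 0 ∧
        (∀ t ∈ Set.Icc (0 : ℝ) T₀, ∀ i : Fin d,
          HasDerivAt (fun s => x s i)
            ((F (x t)).mulVec ((NormedSpace.exp ((t / ε) • G)).mulVec u₀) i) t) ∧
        ∀ t ∈ Set.Icc (0 : ℝ) T₀, Real.sqrt (∑ i, (x t i) ^ 2) ≤ C * ε := by
  obtain ⟨A, B, hAB⟩ := exists_continuousLinearMap_mulVec_eq_of_affine hF
  obtain ⟨C, hC, hsol⟩ := exists_forall_exists_hasDerivAt_norm_le_mul A B hT₀.le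
    (Real.sqrt_nonneg (u₀ ⬝ᵥ u₀))
  obtain ⟨W, hW, hprim⟩ := exists_primitive_exp_smul_div_mulVec hGanti hGinv u₀
  refine ⟨√d * C * W + 1, by positivity, 1, one_pos, fun ε hε _ => ?_⟩
  obtain ⟨w, hw⟩ := hprim ε hε
  obtain ⟨x, hx0, hx⟩ := hsol _ w (W * ε)
    ((continuous_exp_smul_mulVec G u₀).comp (continuous_id.div_const ε))
    (fun s => norm_exp_smul_mulVec_le hGanti _ u₀) (fun s => (hw s).1) (fun s => (hw s).2)
  refine ⟨x, hx0, fun t ht i => ?_, fun t ht => ?_⟩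
  · rw [hAB]
    exact hasDerivAt_pi.1 (hx t ht).1 i
  · calc √(∑ i, x t i ^ 2) ≤ √d * ‖x t‖ := by
          simpa using sqrt_sum_sq_le_sqrt_card_mul_norm (x t)
      _ ≤ √d * (C * (W * ε)) := by gcongr; exact (hx t ht).2
      _ ≤ (√d * C * W + 1) * ε := by nlinarith

/-- Averaging estimate for a control system driven by a rapidly rotating control: if `F` has
affine entries, `G` is antisymmetric and invertible, then the solution of
`ẋ = F(x)·e^{(t/ε)G}u₀`, `x(0)=0`, stays at distance `≤ Cε` of the origin on `[0,T₀]`. -/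
theorem stmt_7 (d m : ℕ) (hd : 1 ≤ d) (hm : 1 ≤ m)
    (F : (Fin d → ℝ) → Matrix (Fin d) (Fin m) ℝ)
    (hF : ∀ i j, ∃ (L : (Fin d → ℝ) →ₗ[ℝ] ℝ) (c : ℝ), ∀ x, F x i j = L x + c)
    (G : Matrix (Fin m) (Fin m) ℝ) (hGanti : Gᵀ = -G) (hGinv : IsUnit G)
    (u₀ : Fin m → ℝ) (T₀ : ℝ) (hT₀ : 0 < T₀) :
    ∃ C > (0 : ℝ), ∃ ε₀ > (0 : ℝ), ∀ ε : ℝ, 0 < ε → ε < ε₀ →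
      ∃ x : ℝ → Fin d → ℝ, x 0 = 0 ∧
        (∀ t ∈ Set.Icc (0 : ℝ) T₀, ∀ i : Fin d,
          HasDerivAt (fun s => x s i)
            ((F (x t)).mulVec ((NormedSpace.exp ((t / ε) • G)).mulVec u₀) i) t) ∧
        ∀ t ∈ Set.Icc (0 : ℝ) T₀, Real.sqrt (∑ i, (x t i) ^ 2) ≤ C * ε :=
  stmt_7_general d m F hF G hGanti hGinv u₀ T₀ hT₀
end

section
/- Let d≥1, let A,B,C:ℝ→M_d(ℝ) be continuous with A(s) and C(s) symmetric for every s, and let (Y,N):ℝ→M_d(ℂ)×M_d(ℂ) solve Ẏ=B(s)Y+C(s)N, Ṅ=−A(s)Y−B(s)ᵀN with Y(0)=I and N(0)=M₀, where M₀ is symmetric, Im M₀ is positive semidefinite, the set of v∈ℂ^d with v*·(Im M₀)·v=0 equals ℂw₀ for a fixed nonzero real vector w₀∈ℝ^d, M₀w₀ is real, and Y(s)w₀≠0 for all s (so that Y(s) is invertible for all s and w(s):=Y(s)w₀ is a nonvanishing real vector). Then, setting M(s)=N(s)Y(s)⁻¹, for every s∈ℝ and every nonzero y∈ℂ^d that is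 Hermitian-orthogonal to w(s), one has y*·Im(M(s))·y>0; that is, Im M(s) is positive definite on the orthogonal complement of w(s). -/
open Matrix

/-!
The flow of `Ẏ = BY + CN, Ṅ = -AY - BᵀN` with `A`, `C` symmetric is symplectic: for any two
solutions, `Y₁ᵀN₂ - N₁ᵀY₂` is constant. The coefficients are real, so `(Ȳ, N̄)` is a solution
as well, and comparing with `s = 0` gives `YᵀN = NᵀY` and `YᴴN - NᴴY = M₀ - M₀ᴴ` for all `s`.
The first identity makes `M = NY⁻¹` symmetric; the second says `Im ⟪Yz, Nz⟫ = Im ⟪z, M₀z⟫`.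
Taking `Yz = 0` shows that `Y(s)` is invertible, and with `y = Yz` it gives
`y*(Im M)y = z*(Im M₀)z ≥ 0`, where equality forces `z ∈ ℂw₀`, i.e. `y ∈ ℂw(s)`.
-/

open Complex
open scoped ComplexOrder

variable {R : Type*} [NormedCommRing R] [NormedAlgebra ℝ R] {l m n : Type*}

/-- Entrywise derivative, the form of the hypotheses; `Matrix` carries no global norm. -/
def HasMatrixDerivAt (Y : ℝ → Matrix m n R) (Y' : Matrix m n R) (s : ℝ) : Prop :=
  ∀ i j, HasDerivAt (fun t => Y t i j) (Y' i j) s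

namespace HasMatrixDerivAt

variable {s : ℝ}

theorem sub {P Q : ℝ → Matrix m n R} {P' Q' : Matrix m n R}
    (hP : HasMatrixDerivAt P P' s) (hQ : HasMatrixDerivAt Q Q' s) :
    HasMatrixDerivAt (fun t => P t - Q t) (P' - Q') s :=
  fun i j => (hP i j).sub (hQ i j)

theorem transpose {P : ℝ → Matrix m n R} {P' : Matrix m n R} (hP : HasMatrixDerivAt P P' s) :
    HasMatrixDerivAt (fun t => (P t)ᵀ) P'ᵀ s :=
  fun i j => hP j i

theorem mul [Fintype m] {P : ℝ → Matrix l m R} {Q : ℝ → Matrix m n R}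
    {P' : Matrix l m R} {Q' : Matrix m n R}
    (hP : HasMatrixDerivAt P P' s) (hQ : HasMatrixDerivAt Q Q' s) :
    HasMatrixDerivAt (fun t => P t * Q t) (P' * Q s + P s * Q') s := by
  intro i j
  simpa only [mul_apply, Matrix.add_apply, Finset.sum_add_distrib] using
    HasDerivAt.fun_sum fun k _ => (hP i k).fun_mul (hQ k j)

theorem map_star {P : ℝ → Matrix m n ℂ} {P' : Matrix m n ℂ} (hP : HasMatrixDerivAt P P' s) :
    HasMatrixDerivAt (fun t => (P t).map star) (P'.map star) s :=
  fun i j => (hP i j).star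

end HasMatrixDerivAt

theorem eq_of_hasMatrixDerivAt_zero {Y : ℝ → Matrix m n R} (h : ∀ s, HasMatrixDerivAt Y 0 s)
    (s t : ℝ) : Y s = Y t := by
  ext i j
  exact is_const_of_deriv_eq_zero (fun x => (h x i j).differentiableAt)
    (fun x => (h x i j).deriv) s t

variable [Fintype n]

def IsHamiltonianSolution (A B C Y N : ℝ → Matrix n n R) : Prop :=
  ∀ s, HasMatrixDerivAt Y (B s * Y s + C s * N s) s ∧
    HasMatrixDerivAt N (-(A s * Y s) - (B s)ᵀ * N s) s

namespace IsHamiltonianSolution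

theorem wronskian_eq {A B C Y₁ N₁ Y₂ N₂ : ℝ → Matrix n n R}
    (hA : ∀ s, (A s)ᵀ = A s) (hC : ∀ s, (C s)ᵀ = C s)
    (h₁ : IsHamiltonianSolution A B C Y₁ N₁) (h₂ : IsHamiltonianSolution A B C Y₂ N₂)
    (s t : ℝ) :
    (Y₁ s)ᵀ * N₂ s - (N₁ s)ᵀ * Y₂ s = (Y₁ t)ᵀ * N₂ t - (N₁ t)ᵀ * Y₂ t := by
  refine eq_of_hasMatrixDerivAt_zero
    (Y := fun s => (Y₁ s)ᵀ * N₂ s - (N₁ s)ᵀ * Y₂ s) (fun s => ?_) s t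
  convert ((h₁ s).1.transpose.mul (h₂ s).2).sub ((h₁ s).2.transpose.mul (h₂ s).1) using 1
  simp only [transpose_add, transpose_sub, transpose_neg, transpose_mul, transpose_transpose,
    hA s, hC s]
  noncomm_ring

theorem map_star {A B C : ℝ → Matrix n n ℝ} {Y N : ℝ → Matrix n n ℂ}
    (h : IsHamiltonianSolution (fun s => (A s).map ofReal) (fun s => (B s).map ofReal)
      (fun s => (C s).map ofReal) Y N) :
    IsHamiltonianSolution (fun s => (A s).map ofReal) (fun s => (B s).map ofReal)
      (fun s => (C s).map ofReal) (fun s => (Y s).map star) (fun s => (N s).map star) := by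
  intro s
  have hreal (X : Matrix n n ℝ) : (X.map ofReal).map (starRingEnd ℂ) = X.map ofReal := by
    ext; simp
  constructor
  · convert (h s).1.map_star using 1
    simp [Matrix.map_add, Matrix.map_mul, hreal]
  · convert (h s).2.map_star using 1
    simp [Matrix.map_sub, Matrix.map_neg, Matrix.map_mul, ← transpose_map, hreal]

end IsHamiltonianSolution

theorem isSymm_mul_inv {K : Type*} [CommRing K] [DecidableEq n] {Y N : Matrix n n K}
    (hYN : Yᵀ * N = Nᵀ * Y) (hY : IsUnit Y.det) : (N * Y⁻¹).IsSymm := by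
  have hYY : Y * Y⁻¹ = 1 := mul_nonsing_inv Y hY
  calc (N * Y⁻¹)ᵀ = Y⁻¹ᵀ * Nᵀ * (Y * Y⁻¹) := by rw [hYY, Matrix.mul_one, transpose_mul]
    _ = Y⁻¹ᵀ * (Yᵀ * N) * Y⁻¹ := by rw [hYN]; noncomm_ring
    _ = (Y * Y⁻¹)ᵀ * N * Y⁻¹ := by rw [transpose_mul]; noncomm_ring
    _ = N * Y⁻¹ := by rw [hYY, transpose_one, Matrix.one_mul]

theorem star_dotProduct_sub_conjTranspose_mulVec (P : Matrix n n ℂ) (z : n → ℂ) :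
    star z ⬝ᵥ (P - Pᴴ) *ᵥ z = 2 * I * (star z ⬝ᵥ P *ᵥ z).im := by
  rw [sub_mulVec, dotProduct_sub, mulVec_conjTranspose, star_dotProduct_star, ← dotProduct_mulVec,
    Complex.star_def, Complex.sub_conj]
  push_cast
  ring

theorem star_dotProduct_map_im_mulVec {P : Matrix n n ℂ} (hP : Pᵀ = P) (z : n → ℂ) :
    star z ⬝ᵥ (P.map im).map ofReal *ᵥ z = (star z ⬝ᵥ P *ᵥ z).im := by
  have hPim : P - Pᴴ = (2 * I) • (P.map im).map ofReal := by
    ext i j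
    have hji : P j i = P i j := congrFun (congrFun hP i) j
    simp only [Matrix.sub_apply, conjTranspose_apply, hji, RCLike.star_def, sub_conj, ofReal_mul,
      ofReal_ofNat, map_map, Matrix.smul_apply, map_apply, Function.comp_apply, smul_eq_mul]
    ring
  have h := star_dotProduct_sub_conjTranspose_mulVec P z
  rw [hPim, smul_mulVec, dotProduct_smul, smul_eq_mul] at h
  exact mul_left_cancel₀ (by simp) h

theorem im_star_mulVec_dotProduct_mulVec {Y N P : Matrix n n ℂ}
    (hW : Yᴴ * N - Nᴴ * Y = P - Pᴴ) (z : n → ℂ) :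
    (star (Y *ᵥ z) ⬝ᵥ N *ᵥ z).im = (star z ⬝ᵥ P *ᵥ z).im := by
  have h := star_dotProduct_sub_conjTranspose_mulVec (Yᴴ * N) z
  rw [conjTranspose_mul, conjTranspose_conjTranspose, hW,
    star_dotProduct_sub_conjTranspose_mulVec] at h
  rw [star_mulVec, ← dotProduct_mulVec, mulVec_mulVec]
  exact_mod_cast (mul_left_cancel₀ (by simp) h).symm

section FixedTime

variable [DecidableEq n] {Y N P : Matrix n n ℂ} {w : n → ℂ}

theorem isUnit_det_of_conjTranspose_wronskian (hW : Yᴴ * N - Nᴴ * Y = P - Pᴴ)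
    (hnull : ∀ v, (star v ⬝ᵥ P *ᵥ v).im = 0 → ∃ c : ℂ, v = c • w) (hYw : Y *ᵥ w ≠ 0) :
    IsUnit Y.det := by
  refine isUnit_iff_ne_zero.2 fun hdet => ?_
  obtain ⟨v, hv, hYv⟩ := exists_mulVec_eq_zero_iff.2 hdet
  obtain ⟨c, rfl⟩ := hnull v (by simp [← im_star_mulVec_dotProduct_mulVec hW, hYv])
  rw [mulVec_smul, smul_eq_zero] at hYv
  exact hv (by rw [hYv.resolve_right hYw, zero_smul])

theorem re_star_dotProduct_map_im_mul_inv_mulVec_pos (hYN : Yᵀ * N = Nᵀ * Y)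
    (hW : Yᴴ * N - Nᴴ * Y = P - Pᴴ) (hpos : ∀ v, 0 ≤ (star v ⬝ᵥ P *ᵥ v).im)
    (hnull : ∀ v, (star v ⬝ᵥ P *ᵥ v).im = 0 → ∃ c : ℂ, v = c • w) (hYw : Y *ᵥ w ≠ 0)
    {y : n → ℂ} (hy : y ≠ 0) (hyw : star y ⬝ᵥ Y *ᵥ w = 0) :
    0 < (star y ⬝ᵥ ((N * Y⁻¹).map im).map ofReal *ᵥ y).re := by
  have hdet := isUnit_det_of_conjTranspose_wronskian hW hnull hYw
  rw [star_dotProduct_map_im_mulVec (isSymm_mul_inv hYN hdet), ofReal_re]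
  set z := Y⁻¹ *ᵥ y
  have hyz : Y *ᵥ z = y := by rw [mulVec_mulVec, mul_nonsing_inv Y hdet, one_mulVec]
  have hyM : (star y ⬝ᵥ (N * Y⁻¹) *ᵥ y).im = (star z ⬝ᵥ P *ᵥ z).im := by
    rw [← im_star_mulVec_dotProduct_mulVec hW, hyz, ← mulVec_mulVec]
  rw [hyM]
  refine (hpos z).lt_of_ne fun h0 => hy ?_
  obtain ⟨c, hc⟩ := hnull z h0.symm
  have hy' : y = c • Y *ᵥ w := by rw [← hyz, hc, mulVec_smul]
  rw [hy', star_smul, smul_dotProduct, smul_eq_mul, mul_eq_zero, star_eq_zero,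
    dotProduct_star_self_eq_zero] at hyw
  rw [hy', hyw.resolve_right hYw, zero_smul]

end FixedTime

theorem stmt_11_general (d : ℕ)
    (A B C : ℝ → Matrix (Fin d) (Fin d) ℝ)
    (hAsymm : ∀ s, (A s)ᵀ = A s) (hCsymm : ∀ s, (C s)ᵀ = C s)
    (Y N : ℝ → Matrix (Fin d) (Fin d) ℂ)
    (hY : ∀ s, ∀ i j, HasDerivAt (fun s => Y s i j)
      ((((B s).map (Complex.ofReal)) * Y s + ((C s).map (Complex.ofReal)) * N s) i j) s)
    (hN : ∀ s, ∀ i j, HasDerivAt (fun s => N s i j)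
      ((-(((A s).map (Complex.ofReal)) * Y s)
        - (((B s).map (Complex.ofReal))ᵀ) * N s) i j) s)
    (M₀ : Matrix (Fin d) (Fin d) ℂ)
    (hY0 : Y 0 = 1) (hN0 : N 0 = M₀)
    (hM₀symm : M₀ᵀ = M₀)
    (hIm : ∀ v : Fin d → ℂ,
      0 ≤ (star v ⬝ᵥ (((M₀.map Complex.im).map (Complex.ofReal)).mulVec v)).re ∧
      (star v ⬝ᵥ (((M₀.map Complex.im).map (Complex.ofReal)).mulVec v)).im = 0)
    (w₀ : Fin d → ℝ)
    (hker : {v : Fin d → ℂ |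
        star v ⬝ᵥ (((M₀.map Complex.im).map (Complex.ofReal)).mulVec v) = 0}
      = {v : Fin d → ℂ | ∃ c : ℂ, v = c • fun i => (w₀ i : ℂ)})
    (hYw : ∀ s : ℝ, (Y s).mulVec (fun i => (w₀ i : ℂ)) ≠ 0) :
    ∀ s : ℝ, ∀ y : Fin d → ℂ, y ≠ 0 →
      star y ⬝ᵥ ((Y s).mulVec fun i => (w₀ i : ℂ)) = 0 →
      0 < (star y ⬝ᵥ
        ((((N s * (Y s)⁻¹).map Complex.im).map (Complex.ofReal)).mulVec y)).re := by
  have hsol : IsHamiltonianSolution (fun s => (A s).map ofReal) (fun s => (B s).map ofReal)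
      (fun s => (C s).map ofReal) Y N := fun s => ⟨hY s, hN s⟩
  have hA (s : ℝ) : ((A s).map ofReal)ᵀ = (A s).map ofReal := by rw [← transpose_map, hAsymm]
  have hC (s : ℝ) : ((C s).map ofReal)ᵀ = (C s).map ofReal := by rw [← transpose_map, hCsymm]
  have hYN (s : ℝ) : (Y s)ᵀ * N s = (N s)ᵀ * Y s := by
    rw [← sub_eq_zero, hsol.wronskian_eq hA hC hsol s 0, hY0, hN0, hM₀symm]
    simp
  have hW (s : ℝ) : (Y s)ᴴ * N s - (N s)ᴴ * Y s = M₀ - M₀ᴴ := by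
    have h := hsol.map_star.wronskian_eq hA hC hsol s 0
    have hH (X : Matrix (Fin d) (Fin d) ℂ) : (X.map star)ᵀ = Xᴴ := rfl
    rwa [hY0, hN0, hH, hH, hH, hH, conjTranspose_one, Matrix.one_mul, Matrix.mul_one] at h
  have hM₀ := star_dotProduct_map_im_mulVec hM₀symm
  intro s y hy hyw
  refine re_star_dotProduct_map_im_mul_inv_mulVec_pos (hYN s) (hW s) (fun v => ?_)
    (fun v hv => ?_) (hYw s) hy hyw
  · simpa only [hM₀, ofReal_re] using (hIm v).1
  · have hv' : star v ⬝ᵥ ((M₀.map Complex.im).map Complex.ofReal).mulVec v = 0 := by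
      rw [hM₀, hv, ofReal_zero]
    exact (Set.ext_iff.1 hker v).1 hv'

/-- Positivity propagation for the Gaussian-beam phase Hessian: under the hypotheses of the
global solvability step (with, in addition, `M₀w₀` real), the imaginary part of
`M(s) = N(s)Y(s)⁻¹` is positive definite on the Hermitian-orthogonal complement of
`w(s) = Y(s)w₀`. -/
theorem stmt_11 (d : ℕ) (hd : 1 ≤ d)
    (A B C : ℝ → Matrix (Fin d) (Fin d) ℝ)
    (hA : Continuous A) (hB : Continuous B) (hC : Continuous C)
    (hAsymm : ∀ s, (A s)ᵀ = A s) (hCsymm : ∀ s, (C s)ᵀ = C s)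
    (Y N : ℝ → Matrix (Fin d) (Fin d) ℂ)
    (hY : ∀ s, ∀ i j, HasDerivAt (fun s => Y s i j)
      ((((B s).map (Complex.ofReal)) * Y s + ((C s).map (Complex.ofReal)) * N s) i j) s)
    (hN : ∀ s, ∀ i j, HasDerivAt (fun s => N s i j)
      ((-(((A s).map (Complex.ofReal)) * Y s)
        - (((B s).map (Complex.ofReal))ᵀ) * N s) i j) s)
    (M₀ : Matrix (Fin d) (Fin d) ℂ)
    (hY0 : Y 0 = 1) (hN0 : N 0 = M₀)
    (hM₀symm : M₀ᵀ = M₀)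
    (hIm : ∀ v : Fin d → ℂ,
      0 ≤ (star v ⬝ᵥ (((M₀.map Complex.im).map (Complex.ofReal)).mulVec v)).re ∧
      (star v ⬝ᵥ (((M₀.map Complex.im).map (Complex.ofReal)).mulVec v)).im = 0)
    (w₀ : Fin d → ℝ) (hw₀ : w₀ ≠ 0)
    (hker : {v : Fin d → ℂ |
        star v ⬝ᵥ (((M₀.map Complex.im).map (Complex.ofReal)).mulVec v) = 0}
      = {v : Fin d → ℂ | ∃ c : ℂ, v = c • fun i => (w₀ i : ℂ)})
    (hM₀w₀ : ∀ i, ((M₀.mulVec fun i => (w₀ i : ℂ)) i).im = 0)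
    (hYw : ∀ s : ℝ, (Y s).mulVec (fun i => (w₀ i : ℂ)) ≠ 0) :
    ∀ s : ℝ, ∀ y : Fin d → ℂ, y ≠ 0 →
      star y ⬝ᵥ ((Y s).mulVec fun i => (w₀ i : ℂ)) = 0 →
      0 < (star y ⬝ᵥ
        ((((N s * (Y s)⁻¹).map Complex.im).map (Complex.ofReal)).mulVec y)).re :=
  stmt_11_general d A B C hAsymm hCsymm Y N hY hN M₀ hY0 hN0 hM₀symm hIm w₀ hker hYw
end

section
/- Let n≥1, T>0, S≥1 an integer, and let γ:[−T,T]→ℝⁿ be a smooth curve, with Γ={(x₀,γ(x₀)) : |x₀|≤T}⊂ℝ^{n+1} its graph. Let c:ℝ^{n+1}→ℂ be a smooth function vanishing at order S−1 on Γ (all partial derivatives of c of order ≤S−1 vanish at every point of Γ) such that supp(c)∩{|x₀|≤T} is compact, and let ψ:ℝ^{n+1}→ℂ be continuous with Im ψ(x) ≥ a·d(x)² on supp(c)∩{|x₀|≤T} for some constant a>0, where d(x) denotes the Euclidean distance from x to Γ. Then there exists a constant C such that for every k≥1, ∫_{|x₀|≤T} |c(x)e^{ikψ(x)}|² dx ≤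 C·k^{−S−n/2}. -/
set_option maxHeartbeats 1000000

open MeasureTheory
open scoped BigOperators

open Metric Set in
private lemma ralston_pow_exp (S : ℕ) (u : ℝ) (hu : 0 ≤ u) :
    u ^ S * Real.exp (-(2*u)) ≤ (S.factorial : ℝ) * Real.exp (-u) := by
  have h1 : u ^ S / (S.factorial : ℝ) ≤ Real.exp u := by
    refine le_trans ?_ (Real.sum_le_exp_of_nonneg hu (S+1))
    exact Finset.single_le_sum (f := fun i => u ^ i / (i.factorial : ℝ))
      (fun i _ => by positivity) (Finset.self_mem_range_succ S)
  have hf : (0:ℝ) < S.factorial := by exact_mod_cast S.factorial_pos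
  have h2 : u ^ S ≤ (S.factorial : ℝ) * Real.exp u := by
    rw [div_le_iff₀ hf] at h1; linarith [h1]
  calc u ^ S * Real.exp (-(2*u)) ≤ ((S.factorial : ℝ) * Real.exp u) * Real.exp (-(2*u)) := by
        apply mul_le_mul_of_nonneg_right h2 (Real.exp_nonneg _)
    _ = (S.factorial : ℝ) * Real.exp (-u) := by
        rw [mul_assoc, ← Real.exp_add]; ring_nf

open Metric Set in
private lemma ralston_taylor {E : Type*} [NormedAddCommGroup E] [NormedSpace ℝ E]
    (f : E → ℂ) (hf : ContDiff ℝ (⊤ : ℕ∞) f) (S : ℕ)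
    (Γ H : Set E) (hΓne : Γ.Nonempty) (hΓc : IsCompact Γ) (hΓH : Γ ⊆ H)
    (hHconv : Convex ℝ H) (hHc : IsCompact H)
    (hvanish : ∀ p ∈ Γ, ∀ j : ℕ, j ≤ S - 1 → iteratedFDeriv ℝ j f p = 0) :
    ∃ C : ℝ, 0 ≤ C ∧ ∀ p ∈ H, ‖f p‖ ≤ C * infDist p Γ ^ S := by
  have key : ∀ j : ℕ, j ≤ S → ∃ C : ℝ, 0 ≤ C ∧
      ∀ p ∈ H, ‖iteratedFDeriv ℝ (S - j) f p‖ ≤ C * infDist p Γ ^ j := by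
    intro j
    induction j with
    | zero =>
      intro _
      obtain ⟨C, hC⟩ := hHc.exists_bound_of_continuousOn
        ((hf.continuous_iteratedFDeriv ((by exact_mod_cast le_top))).continuousOn (s := H))
      refine ⟨max C 0, le_max_right _ _, fun p hp => ?_⟩
      rw [Nat.sub_zero, pow_zero, mul_one]
      exact (hC p hp).trans (le_max_left _ _)
    | succ j ih =>
      intro hj1
      obtain ⟨C, hC0, hC⟩ := ih (by omega)
      refine ⟨C, hC0, fun p hp => ?_⟩
      obtain ⟨q, hqΓ, hq⟩ := hΓc.exists_infDist_eq_dist hΓne p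
      set m := S - (j+1) with hm
      have hm1 : m + 1 = S - j := by omega
      have hdiff : Differentiable ℝ (iteratedFDeriv ℝ m f) :=
        hf.differentiable_iteratedFDeriv (by exact_mod_cast ENat.coe_lt_top m)
      set d := infDist p Γ with hd
      have hd0 : 0 ≤ d := infDist_nonneg
      have hseg : segment ℝ q p ⊆ H := hHconv.segment_subset (hΓH hqΓ) hp
      have bound : ∀ x ∈ segment ℝ q p, ‖fderiv ℝ (iteratedFDeriv ℝ m f) x‖ ≤ C * d ^ j := by
        intro x hx
        have hnorm : ‖fderiv ℝ (iteratedFDeriv ℝ m f) x‖ = ‖iteratedFDeriv ℝ (m+1) f x‖ := by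
          rw [iteratedFDeriv_succ_eq_comp_left]
          simp [LinearIsometryEquiv.norm_map]
        have hdx : infDist x Γ ≤ d := by
          rw [segment_eq_image'] at hx
          obtain ⟨t, ht, rfl⟩ := hx
          calc infDist (q + t • (p - q)) Γ ≤ dist (q + t • (p - q)) q :=
                infDist_le_dist_of_mem hqΓ
            _ = t * dist p q := by
                rw [dist_eq_norm, add_sub_cancel_left, norm_smul, Real.norm_eq_abs,
                  abs_of_nonneg ht.1, dist_eq_norm, norm_sub_rev]
            _ ≤ dist p q := by
                nlinarith [dist_nonneg (x := p) (y := q), ht.1, ht.2]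
            _ = d := hq.symm
        calc ‖fderiv ℝ (iteratedFDeriv ℝ m f) x‖ = ‖iteratedFDeriv ℝ (S - j) f x‖ := by
              rw [hnorm, hm1]
          _ ≤ C * infDist x Γ ^ j := hC x (hseg hx)
          _ ≤ C * d ^ j := by
              apply mul_le_mul_of_nonneg_left (pow_le_pow_left₀ infDist_nonneg hdx j) hC0
      have hmvt := (convex_segment q p).norm_image_sub_le_of_norm_fderiv_le
        (fun x _ => (hdiff x)) bound (left_mem_segment ℝ q p) (right_mem_segment ℝ q p)
      have hq0 : iteratedFDeriv ℝ m f q = 0 := hvanish q hqΓ m (by omega)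
      rw [hq0, sub_zero] at hmvt
      calc ‖iteratedFDeriv ℝ (S - (j+1)) f p‖ ≤ C * d ^ j * ‖p - q‖ := hmvt
        _ = C * d ^ (j+1) := by rw [← dist_eq_norm, ← hq, pow_succ]; ring
  obtain ⟨C, hC0, hC⟩ := key S le_rfl
  refine ⟨C, hC0, fun p hp => ?_⟩
  have := hC p hp
  rwa [Nat.sub_self, norm_iteratedFDeriv_zero] at this

open Metric Set in
private lemma ralston_equiv (n : ℕ) :
    ∃ e : EuclideanSpace ℝ (Fin (n+1)) ≃ᵐ ℝ × EuclideanSpace ℝ (Fin n),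
      MeasurePreserving e volume volume ∧
      ∀ p : EuclideanSpace ℝ (Fin (n+1)), e p = (p 0, WithLp.toLp 2 (fun j => p j.succ)) := by
  refine ⟨(MeasurableEquiv.toLp 2 (Fin (n+1) → ℝ)).symm.trans
    ((MeasurableEquiv.piFinSuccAbove (fun _ : Fin (n+1) => ℝ) 0).trans
      ((MeasurableEquiv.refl ℝ).prodCongr (MeasurableEquiv.toLp 2 (Fin n → ℝ)))),
    ?_, ?_⟩
  · exact (EuclideanSpace.volume_preserving_symm_measurableEquiv_toLp _).trans
      ((volume_preserving_piFinSuccAbove (fun _ : Fin (n+1) => ℝ) 0).trans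
        ((MeasurePreserving.id volume).prod
          (EuclideanSpace.volume_preserving_symm_measurableEquiv_toLp (Fin n)).symm))
  · intro p
    ext
    · rfl
    · simp [MeasurableEquiv.trans_apply, MeasurableEquiv.prodCongr,
        MeasurableEquiv.piFinSuccAbove_apply, Fin.succAbove_zero]
      rfl

open Metric Set in
private lemma ralston_gauss_dom (n : ℕ) (b : ℝ) (hb : 0 < b) (u v : EuclideanSpace ℝ (Fin n)) :
    Real.exp (-b * ‖u - v‖^2) ≤ Real.exp (b * ‖v‖^2) * Real.exp (-(b/2) * ‖u‖^2) := by
  rw [← Real.exp_add]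
  apply Real.exp_le_exp.mpr
  have h1 : ‖u‖ ≤ ‖u - v‖ + ‖v‖ := by
    calc ‖u‖ = ‖(u - v) + v‖ := by rw [sub_add_cancel]
      _ ≤ ‖u - v‖ + ‖v‖ := norm_add_le _ _
  nlinarith [pow_le_pow_left₀ (norm_nonneg u) h1 2, sq_nonneg (‖u-v‖ - ‖v‖), hb.le]

open Metric Set in
private lemma ralston_gauss_integrable (n : ℕ) (T : ℝ) (b : ℝ) (hb : 0 < b)
    (γ : ℝ → EuclideanSpace ℝ (Fin n)) (hγ : Continuous γ) :
    Integrable (fun q : ℝ × EuclideanSpace ℝ (Fin n) =>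
      (Set.Icc (-T) T).indicator (fun _ => (1:ℝ)) q.1 * Real.exp (-b * ‖q.2 - γ q.1‖^2)) := by
  have hGcont : Continuous (fun q : ℝ × EuclideanSpace ℝ (Fin n) =>
      Real.exp (-b * ‖q.2 - γ q.1‖^2)) := by fun_prop
  have hFeq : (fun q : ℝ × EuclideanSpace ℝ (Fin n) =>
      (Set.Icc (-T) T).indicator (fun _ => (1:ℝ)) q.1 * Real.exp (-b * ‖q.2 - γ q.1‖^2))
      = (Set.Icc (-T) T ×ˢ Set.univ).indicator
          (fun q => Real.exp (-b * ‖q.2 - γ q.1‖^2)) := by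
    funext q
    by_cases h : q.1 ∈ Set.Icc (-T) T <;>
      simp [Set.indicator, h, Set.mem_prod]
  rw [hFeq]
  rw [integrable_indicator_iff (measurableSet_Icc.prod MeasurableSet.univ)]
  unfold IntegrableOn
  rw [Measure.volume_eq_prod, ← Measure.prod_restrict, Measure.restrict_univ]
  have hgauss : Integrable (fun y : EuclideanSpace ℝ (Fin n) =>
      Real.exp (-(b/2) * ‖y‖^2)) := by
    have h2 : (0:ℝ) < ((b/2 : ℝ) : ℂ).re := by simpa using half_pos hb
    have hi := (GaussianFourier.integrable_cexp_neg_mul_sq_norm_add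
      (V := EuclideanSpace ℝ (Fin n)) h2 0 0).re
    refine hi.congr (Filter.Eventually.of_forall fun y => ?_)
    simp only [zero_mul, add_zero]
    rw [show -((b/2:ℝ):ℂ) * (‖y‖:ℂ)^2 = (((-(b/2) * ‖y‖^2 : ℝ)):ℂ) by push_cast; ring]
    exact Complex.exp_ofReal_re (-(b/2) * ‖y‖^2)
  have hdom : Integrable (fun q : ℝ × EuclideanSpace ℝ (Fin n) =>
      Real.exp (b * ‖γ q.1‖^2) * Real.exp (-(b/2) * ‖q.2‖^2))
      ((volume.restrict (Set.Icc (-T) T)).prod volume) := by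
    exact Integrable.mul_prod (f := fun x : ℝ => Real.exp (b * ‖γ x‖^2))
      (g := fun y : EuclideanSpace ℝ (Fin n) => Real.exp (-(b/2) * ‖y‖^2))
      (Continuous.integrableOn_Icc (by fun_prop)) hgauss
  refine hdom.mono (hGcont.aestronglyMeasurable) (Filter.Eventually.of_forall fun q => ?_)
  rw [Real.norm_eq_abs, Real.norm_eq_abs, abs_of_nonneg (Real.exp_nonneg _),
    abs_of_nonneg (by positivity)]
  exact ralston_gauss_dom n b hb q.2 (γ q.1)

open Metric Set in
private lemma ralston_gauss_integral (n : ℕ) (T : ℝ) (b : ℝ) (hb : 0 < b)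
    (γ : ℝ → EuclideanSpace ℝ (Fin n)) (hγ : Continuous γ) :
    ∫ q : ℝ × EuclideanSpace ℝ (Fin n),
      (Set.Icc (-T) T).indicator (fun _ => (1:ℝ)) q.1 * Real.exp (-b * ‖q.2 - γ q.1‖^2)
      = (volume (Set.Icc (-T) T)).toReal * (Real.pi / b) ^ ((n:ℝ)/2) := by
  have hFint := ralston_gauss_integrable n T b hb γ hγ
  rw [Measure.volume_eq_prod] at hFint ⊢
  rw [integral_prod _ hFint]
  have inner_eq : ∀ x : ℝ, (∫ y : EuclideanSpace ℝ (Fin n),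
      (Set.Icc (-T) T).indicator (fun _ => (1:ℝ)) x * Real.exp (-b * ‖y - γ x‖^2))
      = (Set.Icc (-T) T).indicator (fun _ => (1:ℝ)) x * (Real.pi / b) ^ ((n:ℝ)/2) := by
    intro x
    rw [integral_const_mul]
    congr 1
    rw [integral_sub_right_eq_self (fun y : EuclideanSpace ℝ (Fin n) =>
      Real.exp (-b * ‖y‖^2)) (γ x)]
    rw [GaussianFourier.integral_rexp_neg_mul_sq_norm hb]
    rw [finrank_euclideanSpace_fin]
  simp_rw [inner_eq]
  have : (fun x : ℝ => (Set.Icc (-T) T).indicator (fun _ => (1:ℝ)) x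
      * (Real.pi / b) ^ ((n:ℝ)/2))
      = (Set.Icc (-T) T).indicator (fun _ => (Real.pi / b) ^ ((n:ℝ)/2)) := by
    funext x
    by_cases h : x ∈ Set.Icc (-T) T <;> simp [Set.indicator, h]
  rw [this, integral_indicator measurableSet_Icc, setIntegral_const, smul_eq_mul, Measure.real_def]

/-- Ralston's oscillatory-integral lemma: if `c` vanishes at order `S-1` on the graph `Γ` of a
smooth curve `γ`, has compact support in the slab `{|x₀| ≤ T}`, and `Im ψ ≥ a·d(·,Γ)²` on
that set, then `∫_{|x₀|≤T} |c e^{ikψ}|² ≤ C k^{-S-n/2}` for all `k ≥ 1`. -/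
theorem stmt_14 (n : ℕ) (hn : 1 ≤ n) (T : ℝ) (hT : 0 < T) (S : ℕ) (hS : 1 ≤ S)
    (γ : ℝ → EuclideanSpace ℝ (Fin n)) (hγ : ContDiff ℝ (⊤ : ℕ∞) γ)
    (Γ : Set (EuclideanSpace ℝ (Fin (n + 1))))
    (hΓ : Γ = {p | |p 0| ≤ T ∧ ∀ i : Fin n, p i.succ = γ (p 0) i})
    (c : EuclideanSpace ℝ (Fin (n + 1)) → ℂ) (hc : ContDiff ℝ (⊤ : ℕ∞) c)
    (hvanish : ∀ p ∈ Γ, ∀ j : ℕ, j ≤ S - 1 → iteratedFDeriv ℝ j c p = 0)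
    (hsupp : IsCompact (tsupport c ∩ {p : EuclideanSpace ℝ (Fin (n + 1)) | |p 0| ≤ T}))
    (ψ : EuclideanSpace ℝ (Fin (n + 1)) → ℂ) (hψ : Continuous ψ)
    (a : ℝ) (ha : 0 < a)
    (hlower : ∀ p ∈ tsupport c ∩ {p : EuclideanSpace ℝ (Fin (n + 1)) | |p 0| ≤ T},
      a * (Metric.infDist p Γ) ^ 2 ≤ (ψ p).im) :
    ∃ Cst : ℝ, ∀ k : ℝ, 1 ≤ k →
      (∫ p in {p : EuclideanSpace ℝ (Fin (n + 1)) | |p 0| ≤ T},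
          ‖c p * Complex.exp (Complex.I * k * ψ p)‖ ^ 2)
        ≤ Cst * k ^ (-(S : ℝ) - n / 2) := by
  classical
  open Metric Set in
  set tail : EuclideanSpace ℝ (Fin (n+1)) → EuclideanSpace ℝ (Fin n) :=
    fun p => WithLp.toLp 2 (fun j => p j.succ) with htail
  set slab : Set (EuclideanSpace ℝ (Fin (n+1))) := {p | |p 0| ≤ T} with hslabdef
  have hslabmeas : MeasurableSet slab := by
    have : slab = (fun p : EuclideanSpace ℝ (Fin (n+1)) => p 0) ⁻¹' Set.Icc (-T) T := by
      ext p; simp [hslabdef, abs_le]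
    rw [this]
    exact (isClosed_Icc.preimage (EuclideanSpace.proj (0 : Fin (n+1))).continuous).measurableSet
  -- the curve parametrization and compactness of Γ
  set g₀ : ℝ → EuclideanSpace ℝ (Fin (n+1)) :=
    fun t => (EuclideanSpace.equiv (Fin (n+1)) ℝ).symm (Fin.cons t (γ t)) with hg₀
  have hg₀app0 : ∀ t, g₀ t 0 = t := fun t => rfl
  have hg₀apps : ∀ t (j : Fin n), g₀ t j.succ = γ t j := fun t j => rfl
  have hg₀cont : Continuous g₀ := by
    apply (EuclideanSpace.equiv (Fin (n+1)) ℝ).symm.continuous.comp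
    apply continuous_pi
    intro i
    refine Fin.cases ?_ ?_ i
    · exact continuous_id
    · intro j
      exact ((EuclideanSpace.proj j).continuous).comp hγ.continuous
  have hΓrepr : Γ = g₀ '' Set.Icc (-T) T := by
    rw [hΓ]
    ext p
    constructor
    · rintro ⟨h1, h2⟩
      refine ⟨p 0, abs_le.mp h1, ?_⟩
      ext i
      refine Fin.cases ?_ ?_ i
      · rfl
      · intro j; rw [hg₀apps, h2 j]
    · rintro ⟨t, ht, rfl⟩
      exact ⟨by rw [hg₀app0]; exact abs_le.mpr ht, fun i => rfl⟩
  have hΓc : IsCompact Γ := by rw [hΓrepr]; exact isCompact_Icc.image hg₀cont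
  have hΓne : Γ.Nonempty := by
    rw [hΓrepr]; exact ⟨g₀ 0, ⟨0, by constructor <;> linarith, rfl⟩⟩
  -- coordinate inequalities
  have hcoord : ∀ p q : EuclideanSpace ℝ (Fin (n+1)),
      dist (p 0) (q 0) ≤ dist p q ∧ dist (tail p) (tail q) ≤ dist p q := by
    intro p q
    have hsq : (dist p q)^2 = ∑ i, dist (p i) (q i) ^ 2 := by
      rw [EuclideanSpace.dist_eq, Real.sq_sqrt]
      exact Finset.sum_nonneg fun i _ => sq_nonneg _
    have hsum := Fin.sum_univ_succ (f := fun i => dist (p i) (q i) ^ 2)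
    have hnn : (0:ℝ) ≤ ∑ j : Fin n, dist (p j.succ) (q j.succ) ^ 2 :=
      Finset.sum_nonneg fun i _ => sq_nonneg _
    have h1 : dist (p 0) (q 0) ^ 2 ≤ (dist p q)^2 := by rw [hsq, hsum]; linarith
    have h2 : dist (tail p) (tail q) ^ 2 ≤ (dist p q)^2 := by
      rw [hsq, hsum, EuclideanSpace.dist_eq, Real.sq_sqrt
        (Finset.sum_nonneg fun i _ => sq_nonneg _)]
      have : (0:ℝ) ≤ dist (p 0) (q 0) ^ 2 := sq_nonneg _
      simp only [htail]
      linarith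
    constructor
    · have := Real.sqrt_le_sqrt h1
      rwa [Real.sqrt_sq dist_nonneg, Real.sqrt_sq dist_nonneg] at this
    · have := Real.sqrt_le_sqrt h2
      rwa [Real.sqrt_sq dist_nonneg, Real.sqrt_sq dist_nonneg] at this
  -- Lipschitz bound for γ on [-T, T]
  obtain ⟨L, hL⟩ := (isCompact_Icc (a := -T) (b := T)).exists_bound_of_continuousOn
    ((hγ.continuous_fderiv (by simp)).continuousOn)
  set M : ℝ := max L 0 with hM
  have hM0 : 0 ≤ M := le_max_right _ _
  have hLip : ∀ s ∈ Set.Icc (-T) T, ∀ t ∈ Set.Icc (-T) T,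
      dist (γ s) (γ t) ≤ M * |s - t| := by
    intro s hs t ht
    rw [dist_eq_norm]
    have := (convex_Icc (-T) T).norm_image_sub_le_of_norm_fderiv_le (C := M)
      (fun x _ => (hγ.differentiable (by simp)).differentiableAt)
      (fun x hx => (hL x hx).trans (le_max_left _ _)) ht hs
    simpa [Real.norm_eq_abs] using this
  -- fiber distance bound
  have hfib : ∀ p ∈ slab, dist (tail p) (γ (p 0)) ≤ (1 + M) * infDist p Γ := by
    intro p hp
    obtain ⟨q, hqΓ, hq⟩ := hΓc.exists_infDist_eq_dist hΓne p
    have hqset := hΓ ▸ hqΓ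
    obtain ⟨hq1, hq2⟩ := hqset
    have htailq : tail q = γ (q 0) := by ext j; exact hq2 j
    have hp0 : p 0 ∈ Set.Icc (-T) T := abs_le.mp hp
    have hq0 : q 0 ∈ Set.Icc (-T) T := abs_le.mp hq1
    calc dist (tail p) (γ (p 0)) ≤ dist (tail p) (tail q) + dist (tail q) (γ (p 0)) :=
          dist_triangle _ _ _
      _ = dist (tail p) (tail q) + dist (γ (q 0)) (γ (p 0)) := by rw [htailq]
      _ ≤ dist p q + M * |q 0 - p 0| := by
          gcongr
          · exact (hcoord p q).2
          · exact hLip _ hq0 _ hp0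
      _ ≤ dist p q + M * dist p q := by
          have : |q 0 - p 0| = dist (p 0) (q 0) := by rw [Real.dist_eq, abs_sub_comm]
          rw [this]
          have := (hcoord p q).1
          nlinarith
      _ = (1 + M) * infDist p Γ := by rw [hq]; ring
  -- Taylor-type bound on the compact convex hull
  obtain ⟨R, hR⟩ := (hsupp.union hΓc).isBounded.subset_closedBall 0
  obtain ⟨C₀, hC₀0, hC₀⟩ := ralston_taylor c hc S Γ (Metric.closedBall 0 R) hΓne hΓc
    (fun x hx => hR (Or.inr hx)) (convex_closedBall _ _) (isCompact_closedBall _ _) hvanish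
  -- constants
  set κ : ℝ := a / (1 + M)^2 with hκ
  have hκ0 : 0 < κ := by positivity
  set C₄ : ℝ := C₀^2 * (S.factorial : ℝ) * (a^S)⁻¹ with hC₄
  have hC₄0 : 0 ≤ C₄ := by positivity
  -- pointwise bound
  have hpt : ∀ k : ℝ, 1 ≤ k → ∀ p ∈ slab,
      ‖c p * Complex.exp (Complex.I * k * ψ p)‖ ^ 2
        ≤ C₄ * (k^S)⁻¹ * Real.exp (-(k*κ) * ‖tail p - γ (p 0)‖^2) := by
    intro k hk p hp
    have hk0 : (0:ℝ) < k := lt_of_lt_of_le one_pos hk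
    by_cases hpc : p ∈ tsupport c
    · have hpK : p ∈ tsupport c ∩ {p : EuclideanSpace ℝ (Fin (n + 1)) | |p 0| ≤ T} := ⟨hpc, hp⟩
      set d : ℝ := infDist p Γ with hd
      have hd0 : (0:ℝ) ≤ d := infDist_nonneg
      have him : a * d^2 ≤ (ψ p).im := hlower p hpK
      have hnormc : ‖c p‖ ≤ C₀ * d^S := hC₀ p (hR (Or.inl hpK))
      have hexp : ‖Complex.exp (Complex.I * k * ψ p)‖ = Real.exp (-(k * (ψ p).im)) := by
        rw [Complex.norm_exp]
        congr 1
        simp [Complex.mul_re, Complex.mul_im]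
      rw [norm_mul, hexp, mul_pow, ← Real.exp_nat_mul]
      have step1 : ‖c p‖^2 * Real.exp ((2:ℕ) * (-(k * (ψ p).im)))
          ≤ (C₀ * d^S)^2 * Real.exp (-(2 * (k * (a * d^2)))) := by
        apply mul_le_mul (pow_le_pow_left₀ (norm_nonneg _) hnormc 2)
          (Real.exp_le_exp.mpr (by push_cast; nlinarith [him, hk0.le]))
          (Real.exp_nonneg _) (by positivity)
      refine step1.trans ?_
      set u : ℝ := k * (a * d^2) with hu
      have hu0 : 0 ≤ u := by positivity
      have hps : (C₀ * d^S)^2 = C₀^2 * (d^2)^S := by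
        rw [mul_pow, ← pow_mul, ← pow_mul, mul_comm S 2]
      have hds : (d^2)^S = u^S * ((k*a)^S)⁻¹ := by
        have hka : (0:ℝ) < k * a := by positivity
        have : u^S = (k*a)^S * (d^2)^S := by
          rw [← mul_pow]; congr 1; rw [hu]; ring
        rw [this]
        field_simp
      have hmain := ralston_pow_exp S u hu0
      have hexp2 : Real.exp (-u) ≤ Real.exp (-(k*κ) * ‖tail p - γ (p 0)‖^2) := by
        apply Real.exp_le_exp.mpr
        have hfb := hfib p hp
        have hfb' : ‖tail p - γ (p 0)‖ ≤ (1 + M) * d := by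
          rw [← dist_eq_norm]; exact hfb
        have hsq : ‖tail p - γ (p 0)‖^2 ≤ ((1 + M) * d)^2 :=
          pow_le_pow_left₀ (norm_nonneg _) hfb' 2
        have hkey : κ * ‖tail p - γ (p 0)‖^2 ≤ a * d^2 := by
          calc κ * ‖tail p - γ (p 0)‖^2 ≤ κ * ((1 + M) * d)^2 := by
                exact mul_le_mul_of_nonneg_left hsq hκ0.le
            _ = a * d^2 := by
                rw [hκ]; field_simp
        have := mul_le_mul_of_nonneg_left hkey hk0.le
        rw [hu]
        linarith
      calc (C₀ * d^S)^2 * Real.exp (-(2 * (k * (a * d^2))))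
          = C₀^2 * ((d^2)^S * Real.exp (-(2*u))) := by
            rw [hps, hu]; ring_nf
        _ = C₀^2 * ((k*a)^S)⁻¹ * (u^S * Real.exp (-(2*u))) := by
            rw [hds]; ring
        _ ≤ C₀^2 * ((k*a)^S)⁻¹ * ((S.factorial : ℝ) * Real.exp (-u)) := by
            exact mul_le_mul_of_nonneg_left hmain (by positivity)
        _ ≤ C₀^2 * ((k*a)^S)⁻¹ * ((S.factorial : ℝ)
              * Real.exp (-(k*κ) * ‖tail p - γ (p 0)‖^2)) := by
            exact mul_le_mul_of_nonneg_left
              (mul_le_mul_of_nonneg_left hexp2 (by positivity)) (by positivity)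
        _ = C₄ * (k^S)⁻¹ * Real.exp (-(k*κ) * ‖tail p - γ (p 0)‖^2) := by
            rw [hC₄, mul_pow, mul_inv]
            ring
    · have hcz : c p = 0 := image_eq_zero_of_notMem_tsupport hpc
      rw [hcz, zero_mul, norm_zero, zero_pow (two_ne_zero)]
      positivity
  -- measure-theoretic part
  obtain ⟨e, hePres, heApp⟩ := ralston_equiv n
  refine ⟨C₄ * (volume (Set.Icc (-T) T)).toReal * (Real.pi / κ) ^ ((n:ℝ)/2), ?_⟩
  intro k hk
  have hk0 : (0:ℝ) < k := lt_of_lt_of_le one_pos hk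
  set b : ℝ := k * κ with hb
  have hb0 : 0 < b := by positivity
  set F : ℝ × EuclideanSpace ℝ (Fin n) → ℝ := fun q =>
    C₄ * (k^S)⁻¹ * ((Set.Icc (-T) T).indicator (fun _ => (1:ℝ)) q.1
      * Real.exp (-b * ‖q.2 - γ q.1‖^2)) with hF
  have hFe : ∀ p : EuclideanSpace ℝ (Fin (n+1)),
      F (e p) = slab.indicator (fun p => C₄ * (k^S)⁻¹
        * Real.exp (-(k*κ) * ‖tail p - γ (p 0)‖^2)) p := by
    intro p
    simp only [hF]
    rw [heApp p]
    by_cases hp : p ∈ slab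
    · have hp' : p 0 ∈ Set.Icc (-T) T := abs_le.mp hp
      simp only [Set.indicator_of_mem hp, Set.indicator_of_mem hp', one_mul]
      try rw [hb]
    · have hp' : p 0 ∉ Set.Icc (-T) T := fun h => hp (abs_le.mpr h)
      simp only [Set.indicator_of_notMem hp, Set.indicator_of_notMem hp']
      simp
  have hFint : Integrable F volume :=
    (ralston_gauss_integrable n T b hb0 γ hγ.continuous).const_mul _
  have hGint : IntegrableOn (fun p => C₄ * (k^S)⁻¹
      * Real.exp (-(k*κ) * ‖tail p - γ (p 0)‖^2)) slab volume := by
    rw [← integrable_indicator_iff hslabmeas]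
    have : slab.indicator (fun p => C₄ * (k^S)⁻¹
        * Real.exp (-(k*κ) * ‖tail p - γ (p 0)‖^2)) = F ∘ e := by
      funext p; exact (hFe p).symm
    rw [this]
    exact (hePres.integrable_comp_emb e.measurableEmbedding).mpr hFint
  have hmono : (∫ p in slab, ‖c p * Complex.exp (Complex.I * k * ψ p)‖ ^ 2)
      ≤ ∫ p in slab, C₄ * (k^S)⁻¹ * Real.exp (-(k*κ) * ‖tail p - γ (p 0)‖^2) := by
    apply integral_mono_of_nonneg
    · exact Filter.Eventually.of_forall fun p => by positivity
    · exact hGint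
    · refine (ae_restrict_iff' hslabmeas).mpr (Filter.Eventually.of_forall fun p hp => ?_)
      exact hpt k hk p hp
  have hval : (∫ p in slab, C₄ * (k^S)⁻¹ * Real.exp (-(k*κ) * ‖tail p - γ (p 0)‖^2))
      = C₄ * (k^S)⁻¹ * ((volume (Set.Icc (-T) T)).toReal * (Real.pi / b) ^ ((n:ℝ)/2)) := by
    rw [← integral_indicator hslabmeas]
    have : slab.indicator (fun p => C₄ * (k^S)⁻¹
        * Real.exp (-(k*κ) * ‖tail p - γ (p 0)‖^2)) = fun p => F (e p) := by
      funext p; exact (hFe p).symm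
    rw [this]
    rw [hePres.integral_comp e.measurableEmbedding F]
    rw [hF]
    simp_rw [integral_const_mul]
    rw [ralston_gauss_integral n T b hb0 γ hγ.continuous]
  refine hmono.trans ?_
  rw [hval]
  -- final rpow arithmetic
  have hrw : (Real.pi / b) ^ ((n:ℝ)/2)
      = (Real.pi / κ) ^ ((n:ℝ)/2) * (k ^ ((n:ℝ)/2))⁻¹ := by
    have : Real.pi / b = (Real.pi / κ) * k⁻¹ := by
      rw [hb, div_mul_eq_div_div_swap, div_eq_mul_inv]
    rw [this, Real.mul_rpow (by positivity) (by positivity), Real.inv_rpow hk0.le]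
  have hks : ((k:ℝ)^S)⁻¹ = (k ^ ((S:ℝ)))⁻¹ := by rw [Real.rpow_natCast]
  rw [hrw, hks]
  have hfin : (k ^ ((S:ℝ)))⁻¹ * (k ^ ((n:ℝ)/2))⁻¹ = k ^ (-(S:ℝ) - (n:ℝ)/2) := by
    rw [← mul_inv, ← Real.rpow_add hk0, ← Real.rpow_neg hk0.le]
    ring_nf
  calc C₄ * (k ^ ((S:ℝ)))⁻¹ * ((volume (Set.Icc (-T) T)).toReal
        * ((Real.pi / κ) ^ ((n:ℝ)/2) * (k ^ ((n:ℝ)/2))⁻¹))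
      = (C₄ * (volume (Set.Icc (-T) T)).toReal * (Real.pi / κ) ^ ((n:ℝ)/2))
        * ((k ^ ((S:ℝ)))⁻¹ * (k ^ ((n:ℝ)/2))⁻¹) := by ring
    _ = (C₄ * (volume (Set.Icc (-T) T)).toReal * (Real.pi / κ) ^ ((n:ℝ)/2))
        * k ^ (-(S:ℝ) - (n:ℝ)/2) := by rw [hfin]
    _ ≤ (C₄ * (volume (Set.Icc (-T) T)).toReal * (Real.pi / κ) ^ ((n:ℝ)/2))
        * k ^ (-(S:ℝ) - (n:ℝ)/2) := le_rfl
end
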